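/- arXiv:2409.03871 — 5 statements merged into one kernel-verified Lean document; each statement's English description precedes it below -/
import Mathlib

section
/- Bound on R_{T1}: Under the setup assumptions together with the interaction condition, let R_{T1}(t₀, t₁) := ∑_{q=0}^{r−1} [ Q_{V1}(t_q, t_{q+1}) + Q_{V2}(t_q, t_{q+1}) + Q_1(t_q, t_{q+1}) + R_{L1}(t_q, t_{q+1}) ] − I(t_r, t₁) + Q_{V1}(t_r, t₁) + Q_{V2}(t_r, t₁) + Q_1(t_r, t₁) + Q_{1T}(t_r, t₁) + H(t_r, t₁), with the terms Q_{V1}, Q_{V2}, Q_1, Q_{1T}, H, I and R_{L1} as defined in the context. Then there exist constants c₁, c₂ > 0 depending only on l and L (and not on t₀, t₁, ω₁, Λ₁ or x₀) such that ‖R_{T1}(t₀, t₁)‖ ≤ Λ₁ ‖x₀‖ ω₁^{p′−1} ( c₁ (t₁ − t₀) + c₂ ). -/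
open MeasureTheory Real Filter

noncomputable section

/-- The state space `ℝ^n`. -/
abbrev E (n : ℕ) := EuclideanSpace ℝ (Fin n)

/-- Lie derivative `L_{f_a} f_b (t,x) = D_x f_b(t,x) [f_a(t,x)]`. -/
def lieDeriv {n : ℕ} (f : ℕ → ℝ → E n → E n)
    (Df : ℕ → ℝ → E n → (E n →L[ℝ] E n)) (a b : ℕ) (t : ℝ) (x : E n) : E n :=
  Df b t x (f a t x)

/-- Second Lie derivative `L_{f_m} L_{f_j} f_i (t,x) = D_x (L_{f_j} f_i)(t,x) [f_m(t,x)]`. -/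
def lieDeriv2 {n : ℕ} (f : ℕ → ℝ → E n → E n)
    (Df : ℕ → ℝ → E n → (E n →L[ℝ] E n))
    (DLf : ℕ → ℕ → ℝ → E n → (E n →L[ℝ] E n)) (m j i : ℕ) (t : ℝ) (x : E n) : E n :=
  DLf j i t x (f m t x)

/-- Lie bracket `[f_i, f_j] = L_{f_i} f_j − L_{f_j} f_i`. -/
def lieBracket {n : ℕ} (f : ℕ → ℝ → E n → E n)
    (Df : ℕ → ℝ → E n → (E n →L[ℝ] E n)) (i j : ℕ) (t : ℝ) (x : E n) : E n :=
  lieDeriv f Df i j t x - lieDeriv f Df j i t x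

/-- `γ_{ij}(ω) = (ω^{p_i+p_j}/T) ∫₀^T ∫₀^θ u_j(ωθ) u_i(ωτ) dτ dθ`, `T = 2π/ω`. -/
def gammaCoeff (p : ℕ → ℝ) (u : ℕ → ℝ → ℝ) (i j : ℕ) (ω : ℝ) : ℝ :=
  ω ^ (p i + p j) / (2 * π / ω) *
    ∫ θ in (0:ℝ)..(2 * π / ω), ∫ τ in (0:ℝ)..θ, u j (ω * θ) * u i (ω * τ)

/-- Regularity of a time-dependent vector field: continuous in the first argument,
globally uniformly `L`-Lipschitz in the second argument, and vanishing at `x = 0`. -/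
def RegVF {n : ℕ} (L : ℝ) (g : ℝ → E n → E n) : Prop :=
  (∀ x, Continuous fun t => g t x) ∧
  (∀ t x y, ‖g t x - g t y‖ ≤ L * ‖x - y‖) ∧
  (∀ t, g t 0 = 0)

/-- Standing assumptions: dither assumptions and vector-field assumptions. -/
structure Hyps {n : ℕ} (l : ℕ)
    (f : ℕ → ℝ → E n → E n)
    (Df : ℕ → ℝ → E n → (E n →L[ℝ] E n))
    (ft : ℕ → ℝ → E n → E n)
    (Lft : ℕ → ℕ → ℝ → E n → E n)
    (DLf : ℕ → ℕ → ℝ → E n → (E n →L[ℝ] E n))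
    (u : ℕ → ℝ → ℝ) (p : ℕ → ℝ) (L : ℝ) : Prop where
  hp0 : p 0 = 0
  hu0 : ∀ t, u 0 t = 1
  hp : ∀ i, 1 ≤ i → i ≤ l → p i ∈ Set.Ioo (0:ℝ) 1
  humeas : ∀ i, i ≤ l → Measurable (u i)
  hubdd : ∀ i, i ≤ l → ∀ t, |u i t| ≤ 1
  huper : ∀ i, i ≤ l → ∀ t, u i (t + 2 * π) = u i t
  huzm : ∀ i, 1 ≤ i → i ≤ l → (∫ t in (0:ℝ)..(2 * π), u i t) = 0
  hLpos : 0 < L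
  hDf : ∀ i, i ≤ l → ∀ t x, HasFDerivAt (f i t) (Df i t x) x
  hft : ∀ i, i ≤ l → ∀ x t, HasDerivAt (fun s => f i s x) (ft i t x) t
  hLft : ∀ i j, i ≤ l → j ≤ l → ∀ x t,
    HasDerivAt (fun s => lieDeriv f Df j i s x) (Lft j i t x) t
  hDLf : ∀ i j, i ≤ l → j ≤ l → ∀ t x,
    HasFDerivAt (fun y => lieDeriv f Df j i t y) (DLf j i t x) x
  hreg_f : ∀ i, i ≤ l → RegVF L (f i)
  hreg_ft : ∀ i, i ≤ l → RegVF L (ft i)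
  hreg_Lf : ∀ i j, i ≤ l → j ≤ l → RegVF L (lieDeriv f Df j i)
  hreg_Lft : ∀ i j, i ≤ l → j ≤ l → RegVF L (Lft j i)
  hreg_LLf : ∀ i j m, i ≤ l → j ≤ l → m ≤ l → RegVF L (lieDeriv2 f Df DLf m j i)

/-- The interaction condition on the powers `p_i` and the Lie brackets. -/
def InteractionCondition {n : ℕ} (l : ℕ) (f : ℕ → ℝ → E n → E n)
    (Df : ℕ → ℝ → E n → (E n →L[ℝ] E n)) (u : ℕ → ℝ → ℝ) (p : ℕ → ℝ) : Prop :=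
  ∀ i j, 1 ≤ i → i ≤ l → 1 ≤ j → j ≤ l → 1 < p i + p j →
    (∀ ω : ℝ, 0 < ω → gammaCoeff p u i j ω = 0) ∨
    (∀ (t : ℝ) (x : E n), lieBracket f Df i j t x = 0)

/-- `x` is a (Carathéodory, i.e. integral-form) solution of the input-affine system (S)
with dither frequency `ω` on the set `s`, with initial time `t₀`. -/
def IsSSol {n : ℕ} (l : ℕ) (f : ℕ → ℝ → E n → E n) (u : ℕ → ℝ → ℝ) (p : ℕ → ℝ)
    (ω : ℝ) (x : ℝ → E n) (s : Set ℝ) (t₀ : ℝ) : Prop :=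
  ContinuousOn x s ∧
  ∀ t ∈ s, x t = x t₀ + ∫ τ in t₀..t,
    (f 0 τ (x τ) + ∑ i ∈ Finset.Icc 1 l, (ω ^ p i * u i (ω * τ)) • f i τ (x τ))

/-- `x` is a solution of the associated Lie-bracket system (LBS), with coefficients
`ν i j = lim_{ω → ∞} γ_{ij}(ω)`, on the set `s`, with initial time `t₀`. -/
def IsLBSSol {n : ℕ} (l : ℕ) (f : ℕ → ℝ → E n → E n)
    (Df : ℕ → ℝ → E n → (E n →L[ℝ] E n)) (ν : ℕ → ℕ → ℝ)
    (x : ℝ → E n) (s : Set ℝ) (t₀ : ℝ) : Prop :=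
  ContinuousOn x s ∧
  ∀ t ∈ s, x t = x t₀ + ∫ τ in t₀..t,
    (f 0 τ (x τ) + ∑ i ∈ Finset.Icc 1 l, ∑ j ∈ Finset.Ioc i l,
      ν i j • lieBracket f Df i j τ (x τ))

end
noncomputable section

/-- `V_i(t_s, t_e) = ∫_{t_s}^{t_e} ω₁^{p_i} u_i(ω₁ θ) dθ`. -/
def Vi (u : ℕ → ℝ → ℝ) (p : ℕ → ℝ) (ω₁ : ℝ) (i : ℕ) (ts te : ℝ) : ℝ :=
  ∫ θ in ts..te, ω₁ ^ p i * u i (ω₁ * θ)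

/-- `V_{ij}(t_s, t_e) = ∫_{t_s}^{t_e} ω₁^{p_i} u_i(ω₁ θ) V_j(t_s, θ) dθ`. -/
def Vij (u : ℕ → ℝ → ℝ) (p : ℕ → ℝ) (ω₁ : ℝ) (i j : ℕ) (ts te : ℝ) : ℝ :=
  ∫ θ in ts..te, (ω₁ ^ p i * u i (ω₁ * θ)) * Vi u p ω₁ j ts θ

/-- The remainder `R(t_s, t_e)`. -/
def Rrem {n : ℕ} (l : ℕ) (f : ℕ → ℝ → E n → E n)
    (Df : ℕ → ℝ → E n → (E n →L[ℝ] E n))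
    (DLf : ℕ → ℕ → ℝ → E n → (E n →L[ℝ] E n))
    (u : ℕ → ℝ → ℝ) (p : ℕ → ℝ) (ω₁ : ℝ) (x : ℝ → E n) (ts te : ℝ) : E n :=
  ∑ i ∈ Finset.Icc 1 l, ∑ j ∈ Finset.Icc 0 l, ∑ m ∈ Finset.Icc 0 l,
    ω₁ ^ (p i + p j + p m) •
      ∫ θ in ts..te, u i (ω₁ * θ) •
        ∫ τ in ts..θ, u j (ω₁ * τ) •
          ∫ σ in ts..τ, u m (ω₁ * σ) • lieDeriv2 f Df DLf m j i σ (x σ)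

/-- The term `Q_{V1}(t_s, t_e)`. -/
def QV1 {n : ℕ} (l : ℕ) (ft : ℕ → ℝ → E n → E n)
    (u : ℕ → ℝ → ℝ) (p : ℕ → ℝ) (ω₁ : ℝ) (x : ℝ → E n) (ts te : ℝ) : E n :=
  ∑ i ∈ Finset.Icc 1 l, ω₁ ^ p i •
    ∫ θ in ts..te, u i (ω₁ * θ) • ∫ τ in ts..θ, ft i τ (x τ)

/-- The term `Q_{V2}(t_s, t_e)`. -/
def QV2 {n : ℕ} (l : ℕ) (Lft : ℕ → ℕ → ℝ → E n → E n)
    (u : ℕ → ℝ → ℝ) (p : ℕ → ℝ) (ω₁ : ℝ) (x : ℝ → E n) (ts te : ℝ) : E n :=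
  ∑ i ∈ Finset.Ico 1 l, ∑ j ∈ Finset.Icc 0 l,
    ω₁ ^ (p i + p j) •
      ∫ θ in ts..te, u i (ω₁ * θ) •
        ∫ τ in ts..θ, u j (ω₁ * τ) • ∫ σ in ts..τ, Lft j i σ (x σ)

/-- The term `Q_1(t_s, t_e)`. -/
def Q1 {n : ℕ} (l : ℕ) (f : ℕ → ℝ → E n → E n)
    (Df : ℕ → ℝ → E n → (E n →L[ℝ] E n))
    (u : ℕ → ℝ → ℝ) (p : ℕ → ℝ) (ω₁ : ℝ) (x : ℝ → E n) (ts te : ℝ) : E n :=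
  ∑ i ∈ Finset.Icc 1 l, Vij u p ω₁ i 0 ts te • lieDeriv f Df 0 i ts (x ts)

/-- The term `Q_{1T}(t_s, t_e)`. -/
def Q1T {n : ℕ} (l : ℕ) (f : ℕ → ℝ → E n → E n)
    (Df : ℕ → ℝ → E n → (E n →L[ℝ] E n))
    (u : ℕ → ℝ → ℝ) (p : ℕ → ℝ) (ω₁ : ℝ) (x : ℝ → E n) (ts te : ℝ) : E n :=
  (∑ i ∈ Finset.Icc 1 l, ∑ j ∈ Finset.Ioc i l,
    (Vi u p ω₁ i ts te * Vi u p ω₁ j ts te) • lieDeriv f Df j i ts (x ts))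
  + (1/2 : ℝ) • ∑ i ∈ Finset.Icc 1 l,
      ((Vi u p ω₁ i ts te) ^ 2) • lieDeriv f Df i i ts (x ts)

/-- The term `H(t_s, t_e)`. -/
def Hterm {n : ℕ} (l : ℕ) (f : ℕ → ℝ → E n → E n)
    (Df : ℕ → ℝ → E n → (E n →L[ℝ] E n))
    (u : ℕ → ℝ → ℝ) (p : ℕ → ℝ) (ω₁ : ℝ) (x : ℝ → E n) (ts te : ℝ) : E n :=
  (∑ i ∈ Finset.Icc 1 l, Vi u p ω₁ i ts te • f i ts (x ts))
  + ∑ i ∈ Finset.Icc 1 l, ∑ j ∈ Finset.Ioc i l,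
      Vij u p ω₁ j i ts te • lieBracket f Df i j ts (x ts)

/-- The term `I(t_s, t_e)`. -/
def Iterm {n : ℕ} (l : ℕ) (f : ℕ → ℝ → E n → E n)
    (Df : ℕ → ℝ → E n → (E n →L[ℝ] E n))
    (u : ℕ → ℝ → ℝ) (p : ℕ → ℝ) (ω₁ : ℝ) (x : ℝ → E n) (ts te : ℝ) : E n :=
  ∫ θ in ts..te, ∑ i ∈ Finset.Icc 1 l, ∑ j ∈ Finset.Ioc i l,
    gammaCoeff p u i j ω₁ • lieBracket f Df i j θ (x θ)

/-- The term `R_{L1}(t_s, t_e)`. -/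
def RL1 {n : ℕ} (l : ℕ) (f : ℕ → ℝ → E n → E n)
    (Df : ℕ → ℝ → E n → (E n →L[ℝ] E n))
    (u : ℕ → ℝ → ℝ) (p : ℕ → ℝ) (ω₁ : ℝ) (x : ℝ → E n) (ts te : ℝ) : E n :=
  ∑ i ∈ Finset.Icc 1 l, ∑ j ∈ Finset.Ioc i l,
    gammaCoeff p u i j ω₁ •
      ∫ θ in ts..te, (lieBracket f Df i j ts (x ts) - lieBracket f Df i j θ (x θ))

/-- The remainder `R_{T1}(t₀, t₁)`. -/
def RT1 {n : ℕ} (l : ℕ) (f : ℕ → ℝ → E n → E n)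
    (Df : ℕ → ℝ → E n → (E n →L[ℝ] E n))
    (ft : ℕ → ℝ → E n → E n) (Lft : ℕ → ℕ → ℝ → E n → E n)
    (u : ℕ → ℝ → ℝ) (p : ℕ → ℝ) (ω₁ : ℝ) (x : ℝ → E n) (t₀ t₁ : ℝ) : E n :=
  let T₁ : ℝ := 2 * π / ω₁
  let r : ℕ := ⌊(t₁ - t₀) / T₁⌋₊
  let tq : ℕ → ℝ := fun q => t₀ + (q : ℝ) * T₁
  (∑ q ∈ Finset.range r,
      (QV1 l ft u p ω₁ x (tq q) (tq (q+1)) + QV2 l Lft u p ω₁ x (tq q) (tq (q+1))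
        + Q1 l f Df u p ω₁ x (tq q) (tq (q+1)) + RL1 l f Df u p ω₁ x (tq q) (tq (q+1))))
    - Iterm l f Df u p ω₁ x (tq r) t₁
    + QV1 l ft u p ω₁ x (tq r) t₁ + QV2 l Lft u p ω₁ x (tq r) t₁
    + Q1 l f Df u p ω₁ x (tq r) t₁ + Q1T l f Df u p ω₁ x (tq r) t₁
    + Hterm l f Df u p ω₁ x (tq r) t₁

end

/-!
Every term of `R_{T1}` is estimated on an interval `[a, b]` of length at most one dither period
`2π/ω`. There `‖x‖ ≤ B := Λ₁‖x₀‖`, so every vector field and Lie derivative along `x` is bounded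
by `L B`, and an iterated integral against the dithers weighted by `ω^{p_i} ≤ ω^{p'}` gains one
factor `b - a` per integration. Since `ω (b - a) ≤ 2π`, each factor `ω^{p'} (b - a)` is at most
`2π ω^{p'-1}`. The terms `Q_{V1}, Q_{V2}, Q_1, R_{L1}` are therefore `O(ω^{p'-1} (b - a))` and add
up to `O(ω^{p'-1} (t₁ - t₀))` over the `r` full periods and the remainder `[t_r, t₁]`, whereas
`Q_{1T}, H, I` occur only on the remainder and are `O(ω^{p'-1})`.
The coefficient `γ_ij` is at most `2π` when `p_i + p_j ≤ 1`, and the interaction condition removes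
the products `γ_ij [f_i, f_j]` otherwise. Finally `R_{L1}` is small because `x` is Lipschitz in
time with constant `(1 + l ω^{p'}) L B`, which makes the brackets along `x` Lipschitz in time.
-/

open Finset intervalIntegral

section Estimates

variable {ι F : Type*} [NormedAddCommGroup F]

lemma norm_sum_le_card_mul (s : Finset ι) {g : ι → F} {C : ℝ} (h : ∀ i ∈ s, ‖g i‖ ≤ C) :
    ‖∑ i ∈ s, g i‖ ≤ #s * C := by
  simpa using norm_sum_le_of_le s h

lemma norm_sum_Icc_le {l : ℕ} {g : ℕ → F} {C : ℝ} (h : ∀ i, 1 ≤ i → i ≤ l → ‖g i‖ ≤ C) :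
    ‖∑ i ∈ Icc 1 l, g i‖ ≤ l * C := by
  simpa using norm_sum_le_card_mul _ fun i hi => h i (mem_Icc.1 hi).1 (mem_Icc.1 hi).2

lemma norm_sum_Icc_Ioc_le {l : ℕ} {g : ℕ → ℕ → F} {C : ℝ} (hC : 0 ≤ C)
    (h : ∀ i j, 1 ≤ i → i < j → j ≤ l → ‖g i j‖ ≤ C) :
    ‖∑ i ∈ Icc 1 l, ∑ j ∈ Ioc i l, g i j‖ ≤ l * (l * C) := by
  refine norm_sum_Icc_le fun i hi hil => (norm_sum_le_card_mul _ fun j hj =>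
    h i j hi (mem_Ioc.1 hj).1 (mem_Ioc.1 hj).2).trans ?_
  gcongr
  simp

variable [NormedSpace ℝ F] {a b C : ℝ}

lemma norm_integral_le_mul_sub {g : ℝ → F} (hab : a ≤ b) (h : ∀ θ ∈ Set.Ioc a b, ‖g θ‖ ≤ C) :
    ‖∫ θ in a..b, g θ‖ ≤ C * (b - a) := by
  have := norm_integral_le_of_norm_le_const (by rwa [Set.uIoc_of_le hab])
  rwa [abs_of_nonneg (sub_nonneg.2 hab)] at this

lemma norm_integral_smul_le {v : ℝ → ℝ} {G : ℝ → F} (hab : a ≤ b) (hv : ∀ t, |v t| ≤ 1)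
    (hG : ∀ θ ∈ Set.Ioc a b, ‖G θ‖ ≤ C) :
    ‖∫ θ in a..b, v θ • G θ‖ ≤ C * (b - a) :=
  norm_integral_le_mul_sub hab fun θ hθ => by
    rw [norm_smul, Real.norm_eq_abs]
    simpa using mul_le_mul (hv θ) (hG θ hθ) (norm_nonneg _) zero_le_one

lemma norm_integral_smul_integral_le {v : ℝ → ℝ} {g : ℝ → F} (hab : a ≤ b) (hC : 0 ≤ C)
    (hv : ∀ t, |v t| ≤ 1) (hg : ∀ σ ∈ Set.Ioc a b, ‖g σ‖ ≤ C) :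
    ‖∫ θ in a..b, v θ • ∫ τ in a..θ, g τ‖ ≤ C * (b - a) ^ 2 := by
  refine (norm_integral_smul_le (C := C * (b - a)) hab hv fun θ hθ => ?_).trans_eq (by ring)
  refine (norm_integral_le_mul_sub hθ.1.le fun τ hτ =>
    hg τ (Set.Ioc_subset_Ioc_right hθ.2 hτ)).trans ?_
  gcongr
  exact hθ.2

lemma norm_integral_smul_integral_smul_integral_le {v w : ℝ → ℝ} {g : ℝ → F} (hab : a ≤ b)
    (hC : 0 ≤ C) (hv : ∀ t, |v t| ≤ 1) (hw : ∀ t, |w t| ≤ 1)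
    (hg : ∀ σ ∈ Set.Ioc a b, ‖g σ‖ ≤ C) :
    ‖∫ θ in a..b, v θ • ∫ τ in a..θ, w τ • ∫ σ in a..τ, g σ‖ ≤ C * (b - a) ^ 3 := by
  refine (norm_integral_smul_le (C := C * (b - a) ^ 2) hab hv fun θ hθ => ?_).trans_eq (by ring)
  refine (norm_integral_smul_integral_le hθ.1.le hC hw fun σ hσ =>
    hg σ (Set.Ioc_subset_Ioc_right hθ.2 hσ)).trans ?_
  have : 0 ≤ θ - a := by linarith [hθ.1]
  gcongr
  exact hθ.2

lemma norm_sub_le_of_hasDerivAt {g g' : ℝ → F} (hab : a ≤ b) (hg : ∀ t, HasDerivAt g (g' t) t)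
    (hg' : ∀ t ∈ Set.Ico a b, ‖g' t‖ ≤ C) : ‖g b - g a‖ ≤ C * (b - a) :=
  norm_image_sub_le_of_norm_deriv_le_segment' (fun t _ => (hg t).hasDerivWithinAt) hg' b
    (Set.right_mem_Icc.2 hab)

end Estimates

lemma rpow_mul_le_of_mul_le {ω p' S c : ℝ} (hω : 0 < ω) (hS : ω * S ≤ c) :
    ω ^ p' * S ≤ c * ω ^ (p' - 1) := by
  rw [rpow_sub hω, rpow_one]
  calc ω ^ p' * S = ω * S * (ω ^ p' / ω) := by field_simp
    _ ≤ c * (ω ^ p' / ω) := by gcongr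

lemma natFloor_div_mul_le_and_sub_le {D T : ℝ} (hD : 0 ≤ D) (hT : 0 < T) :
    ⌊D / T⌋₊ * T ≤ D ∧ D - ⌊D / T⌋₊ * T ≤ T := by
  rw [natCast_floor_eq_intCast_floor (div_nonneg hD hT.le)]
  exact ⟨sub_nonneg.1 (Int.sub_floor_div_mul_nonneg D hT), (Int.sub_floor_div_mul_lt D hT).le⟩

namespace RegVF

variable {n : ℕ} {L : ℝ} {g : ℝ → E n → E n}

lemma norm_le (hg : RegVF L g) (t : ℝ) (y : E n) : ‖g t y‖ ≤ L * ‖y‖ := by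
  simpa [hg.2.2 t] using hg.2.1 t y 0

lemma norm_le_mul (hg : RegVF L g) (hL : 0 ≤ L) {B : ℝ} {y : E n} (hy : ‖y‖ ≤ B) (t : ℝ) :
    ‖g t y‖ ≤ L * B :=
  (hg.norm_le t y).trans (by gcongr)

lemma continuousOn_comp (hg : RegVF L g) {x : ℝ → E n} {s : Set ℝ} (hx : ContinuousOn x s) :
    ContinuousOn (fun t => g t (x t)) s := by
  have hlip : ∀ t, LipschitzWith L.toNNReal (g t) := fun t =>
    LipschitzWith.of_dist_le_mul fun y z => by
      simpa only [dist_eq_norm] using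
        (hg.2.1 t y z).trans (by gcongr; exact Real.le_coe_toNNReal L)
  exact (continuous_prod_of_continuous_lipschitzWith' (Function.uncurry g) _ hlip
    hg.1).comp_continuousOn (continuousOn_id.prodMk hx)

end RegVF

section Dither

variable {u : ℕ → ℝ → ℝ} {p : ℕ → ℝ} {ω a b : ℝ} {i j : ℕ}

lemma abs_Vi_le (hab : a ≤ b) (hω : 0 < ω) (hu : ∀ t, |u i t| ≤ 1) :
    |Vi u p ω i a b| ≤ ω ^ p i * (b - a) := by
  rw [Vi, ← Real.norm_eq_abs]
  refine norm_integral_le_mul_sub hab fun θ _ => ?_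
  rw [Real.norm_eq_abs, abs_mul, abs_of_nonneg (by positivity)]
  simpa using mul_le_mul_of_nonneg_left (hu (ω * θ)) (rpow_nonneg hω.le (p i))

lemma abs_Vij_le (hab : a ≤ b) (hω : 0 < ω) (hui : ∀ t, |u i t| ≤ 1) (huj : ∀ t, |u j t| ≤ 1) :
    |Vij u p ω i j a b| ≤ ω ^ p i * ω ^ p j * (b - a) ^ 2 := by
  rw [Vij, ← Real.norm_eq_abs]
  refine (norm_integral_le_mul_sub (C := ω ^ p i * ω ^ p j * (b - a)) hab fun θ hθ => ?_).trans_eq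
    (by ring)
  rw [Real.norm_eq_abs, abs_mul, abs_mul, abs_of_nonneg (by positivity)]
  have hVj : |Vi u p ω j a θ| ≤ ω ^ p j * (b - a) :=
    (abs_Vi_le hθ.1.le hω huj).trans (by gcongr; exact hθ.2)
  have hui' : ω ^ p i * |u i (ω * θ)| ≤ ω ^ p i := by
    simpa using mul_le_mul_of_nonneg_left (hui (ω * θ)) (rpow_nonneg hω.le (p i))
  exact (mul_le_mul hui' hVj (abs_nonneg _) (by positivity)).trans_eq (by ring)

lemma abs_gammaCoeff_le (hω : 1 ≤ ω) (hui : ∀ t, |u i t| ≤ 1) (huj : ∀ t, |u j t| ≤ 1)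
    (hp : p i + p j ≤ 1) : |gammaCoeff p u i j ω| ≤ 2 * π := by
  have hω0 : 0 < ω := by linarith
  set T := 2 * π / ω
  have hT : 0 < T := by positivity
  have hint : |∫ θ in (0 : ℝ)..T, ∫ τ in (0 : ℝ)..θ, u j (ω * θ) * u i (ω * τ)| ≤ T * T := by
    rw [← Real.norm_eq_abs]
    refine (norm_integral_le_mul_sub (C := T) hT.le fun θ hθ =>
      (norm_integral_le_mul_sub (C := 1) hθ.1.le fun τ _ => ?_).trans ?_).trans_eq (by ring)
    · rw [Real.norm_eq_abs, abs_mul]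
      simpa using mul_le_mul (huj (ω * θ)) (hui (ω * τ)) (abs_nonneg _) zero_le_one
    · linarith [hθ.2]
  have hrpow : ω ^ (p i + p j) ≤ ω := by
    simpa using rpow_le_rpow_of_exponent_le hω hp
  rw [gammaCoeff, abs_mul, abs_div, abs_of_nonneg (by positivity), abs_of_pos hT]
  calc ω ^ (p i + p j) / T * |∫ θ in (0 : ℝ)..T, ∫ τ in (0 : ℝ)..θ, u j (ω * θ) * u i (ω * τ)|
      ≤ ω / T * (T * T) := by gcongr
    _ = 2 * π := by simp only [T]; field_simp

end Dither

noncomputable def sysField {n : ℕ} (l : ℕ) (f : ℕ → ℝ → E n → E n) (u : ℕ → ℝ → ℝ)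
    (p : ℕ → ℝ) (ω : ℝ) (x : ℝ → E n) (τ : ℝ) : E n :=
  f 0 τ (x τ) + ∑ i ∈ Icc 1 l, (ω ^ p i * u i (ω * τ)) • f i τ (x τ)

noncomputable def windowConst (l : ℕ) (L : ℝ) : ℝ :=
  4 * π * l + 4 * π ^ 2 * l * (l + 1) + 8 * π ^ 2 * l ^ 2 * (1 + L + L * l)

noncomputable def tailConst (l : ℕ) : ℝ :=
  2 * π * l + 4 * π ^ 2 * (l ^ 2 + l) + 16 * π ^ 2 * l ^ 2

lemma windowConst_nonneg (l : ℕ) {L : ℝ} (hL : 0 ≤ L) : 0 ≤ windowConst l L := by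
  unfold windowConst
  positivity

lemma tailConst_nonneg (l : ℕ) : 0 ≤ tailConst l := by
  unfold tailConst
  positivity

section System

variable {n l : ℕ} {L : ℝ} {f : ℕ → ℝ → E n → E n} {Df : ℕ → ℝ → E n → (E n →L[ℝ] E n)}
  {ft : ℕ → ℝ → E n → E n} {Lft : ℕ → ℕ → ℝ → E n → E n}
  {DLf : ℕ → ℕ → ℝ → E n → (E n →L[ℝ] E n)} {u : ℕ → ℝ → ℝ} {p : ℕ → ℝ}
  {ω p' B K t₀ t₁ a b θ : ℝ} {i j : ℕ} {x : ℝ → E n}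

namespace Hyps

lemma p_le_one (H : Hyps l f Df ft Lft DLf u p L) (hjl : j ≤ l) : p j ≤ 1 := by
  rcases j.eq_zero_or_pos with rfl | hj
  · simp [H.hp0]
  · exact (H.hp j hj hjl).2.le

lemma norm_lieBracket_le (H : Hyps l f Df ft Lft DLf u p L) (hil : i ≤ l) (hjl : j ≤ l)
    {y : E n} (hy : ‖y‖ ≤ B) (t : ℝ) : ‖lieBracket f Df i j t y‖ ≤ 2 * (L * B) := by
  have h₁ := (H.hreg_Lf j i hjl hil).norm_le_mul H.hLpos.le hy t
  have h₂ := (H.hreg_Lf i j hil hjl).norm_le_mul H.hLpos.le hy t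
  exact (norm_sub_le _ _).trans (by linarith)

lemma norm_gammaCoeff_smul_le (H : Hyps l f Df ft Lft DLf u p L)
    (hIC : InteractionCondition l f Df u p) (hω : 1 ≤ ω) (hi : 1 ≤ i) (hij : i < j)
    (hjl : j ≤ l) {X : E n} (hX : (∀ t y, lieBracket f Df i j t y = 0) → X = 0) :
    ‖gammaCoeff p u i j ω • X‖ ≤ 2 * π * ‖X‖ := by
  rw [norm_smul, Real.norm_eq_abs]
  have hil : i ≤ l := hij.le.trans hjl
  by_cases hp : p i + p j ≤ 1
  · gcongr
    exact abs_gammaCoeff_le hω (H.hubdd i hil) (H.hubdd j hjl) hp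
  · rcases hIC i j hi hil (hi.trans hij.le) hjl (not_le.1 hp) with hγ | hbr
    · rw [hγ ω (by linarith), abs_zero, zero_mul]
      positivity
    · simp [hX hbr]

lemma norm_sysField_le (H : Hyps l f Df ft Lft DLf u p L) (hω : 1 ≤ ω)
    (hp' : ∀ i, 1 ≤ i → i ≤ l → p i ≤ p') {τ : ℝ} (hx : ‖x τ‖ ≤ B) :
    ‖sysField l f u p ω x τ‖ ≤ (1 + l * ω ^ p') * (L * B) := by
  have hfx : ∀ i ≤ l, ‖f i τ (x τ)‖ ≤ L * B := fun i hi =>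
    (H.hreg_f i hi).norm_le_mul H.hLpos.le hx τ
  have hsum : ‖∑ i ∈ Icc 1 l, (ω ^ p i * u i (ω * τ)) • f i τ (x τ)‖ ≤ l * (ω ^ p' * (L * B)) :=
    norm_sum_Icc_le fun i hi hil => by
      rw [norm_smul, Real.norm_eq_abs, abs_mul, abs_of_nonneg (by positivity)]
      have hu : ω ^ p i * |u i (ω * τ)| ≤ ω ^ p' :=
        (mul_le_of_le_one_right (by positivity) (H.hubdd i hil _)).trans
          (rpow_le_rpow_of_exponent_le hω (hp' i hi hil))
      exact mul_le_mul hu (hfx i hil) (norm_nonneg _) (by positivity)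
  exact (norm_add_le _ _).trans ((add_le_add (hfx 0 (Nat.zero_le l)) hsum).trans_eq (by ring))

lemma intervalIntegrable_sysField (H : Hyps l f Df ft Lft DLf u p L)
    (hx : ContinuousOn x (Set.uIcc a b)) :
    IntervalIntegrable (sysField l f u p ω x) volume a b := by
  refine ((H.hreg_f 0 (Nat.zero_le l)).continuousOn_comp hx).intervalIntegrable.add ?_
  rw [← Finset.sum_fn]
  refine IntervalIntegrable.sum _ fun i hi => ?_
  have hil := (mem_Icc.1 hi).2
  have hdither : IntegrableOn (fun τ => ω ^ p i * u i (ω * τ)) (Set.uIcc a b) :=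
    Measure.integrableOn_of_bounded (M := |ω ^ p i|) measure_Icc_lt_top.ne
      (((H.humeas i hil).comp (measurable_const_mul ω)).const_mul _).aestronglyMeasurable
      (ae_of_all _ fun τ => by
        simpa [abs_mul] using
          mul_le_mul_of_nonneg_left (H.hubdd i hil (ω * τ)) (abs_nonneg (ω ^ p i)))
  exact (hdither.smul_continuousOn ((H.hreg_f i hil).continuousOn_comp hx)
    isCompact_uIcc).intervalIntegrable

lemma norm_lieDeriv_sub_le (H : Hyps l f Df ft Lft DLf u p L) (hil : i ≤ l) (hjl : j ≤ l)
    (haθ : a ≤ θ) (hxa : ‖x a‖ ≤ B) (hK : ‖x θ - x a‖ ≤ K * (θ - a)) :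
    ‖lieDeriv f Df j i a (x a) - lieDeriv f Df j i θ (x θ)‖ ≤ L * (B + K) * (θ - a) := by
  have hL := H.hLpos.le
  have htime : ‖lieDeriv f Df j i θ (x a) - lieDeriv f Df j i a (x a)‖ ≤ L * B * (θ - a) :=
    norm_sub_le_of_hasDerivAt haθ (H.hLft i j hil hjl (x a)) fun t _ =>
      (H.hreg_Lft i j hil hjl).norm_le_mul hL hxa t
  have hspace : ‖lieDeriv f Df j i θ (x a) - lieDeriv f Df j i θ (x θ)‖ ≤ L * (K * (θ - a)) :=
    ((H.hreg_Lf i j hil hjl).2.1 θ _ _).trans (by rw [norm_sub_rev]; gcongr)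
  rw [norm_sub_rev] at htime
  calc _ ≤ ‖lieDeriv f Df j i a (x a) - lieDeriv f Df j i θ (x a)‖
        + ‖lieDeriv f Df j i θ (x a) - lieDeriv f Df j i θ (x θ)‖ :=
        norm_sub_le_norm_sub_add_norm_sub _ _ _
    _ ≤ L * (B + K) * (θ - a) := by linarith

lemma norm_lieBracket_sub_le (H : Hyps l f Df ft Lft DLf u p L) (hil : i ≤ l) (hjl : j ≤ l)
    (haθ : a ≤ θ) (hxa : ‖x a‖ ≤ B) (hK : ‖x θ - x a‖ ≤ K * (θ - a)) :
    ‖lieBracket f Df i j a (x a) - lieBracket f Df i j θ (x θ)‖ ≤ 2 * (L * (B + K) * (θ - a)) := by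
  have h₁ := H.norm_lieDeriv_sub_le hil hjl haθ hxa hK
  have h₂ := H.norm_lieDeriv_sub_le hjl hil haθ hxa hK
  have : lieBracket f Df i j a (x a) - lieBracket f Df i j θ (x θ)
      = (lieDeriv f Df i j a (x a) - lieDeriv f Df i j θ (x θ))
        - (lieDeriv f Df j i a (x a) - lieDeriv f Df j i θ (x θ)) := by
    simp only [lieBracket]; abel
  rw [this]
  exact (norm_sub_le _ _).trans (by linarith)

lemma abs_Vi_le_of_exponent_le (H : Hyps l f Df ft Lft DLf u p L) (hω : 1 ≤ ω)
    (hp' : ∀ i, 1 ≤ i → i ≤ l → p i ≤ p') (hab : a ≤ b) (hi : 1 ≤ i) (hil : i ≤ l) :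
    |Vi u p ω i a b| ≤ ω ^ p' * (b - a) :=
  (abs_Vi_le hab (by linarith) (H.hubdd i hil)).trans <| by
    gcongr
    exact hp' i hi hil

lemma abs_Vij_le_of_exponent_le (H : Hyps l f Df ft Lft DLf u p L) (hω : 1 ≤ ω)
    (hp' : ∀ i, 1 ≤ i → i ≤ l → p i ≤ p') (hab : a ≤ b) (hi : 1 ≤ i) (hil : i ≤ l)
    (hj : 1 ≤ j) (hjl : j ≤ l) : |Vij u p ω i j a b| ≤ (ω ^ p' * (b - a)) ^ 2 :=
  (abs_Vij_le hab (by linarith) (H.hubdd i hil) (H.hubdd j hjl)).trans <| by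
    rw [mul_pow, sq (ω ^ p')]
    gcongr
    · exact hp' i hi hil
    · exact hp' j hj hjl

lemma norm_QV1_le (H : Hyps l f Df ft Lft DLf u p L) (hω : 1 ≤ ω)
    (hp' : ∀ i, 1 ≤ i → i ≤ l → p i ≤ p') (hab : a ≤ b) (hx : ∀ t ∈ Set.Icc a b, ‖x t‖ ≤ B) :
    ‖QV1 l ft u p ω x a b‖ ≤ l * (ω ^ p' * (L * B * (b - a) ^ 2)) := by
  have hLB : 0 ≤ L * B := mul_nonneg H.hLpos.le ((norm_nonneg _).trans (hx a ⟨le_rfl, hab⟩))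
  refine norm_sum_Icc_le fun i hi hil => ?_
  rw [norm_smul, Real.norm_eq_abs, abs_of_nonneg (by positivity)]
  exact mul_le_mul (rpow_le_rpow_of_exponent_le hω (hp' i hi hil))
    (norm_integral_smul_integral_le hab hLB (fun t => H.hubdd i hil _) fun τ hτ =>
      (H.hreg_ft i hil).norm_le_mul H.hLpos.le (hx τ (Set.Ioc_subset_Icc_self hτ)) τ)
    (norm_nonneg _) (by positivity)

lemma norm_QV2_le (H : Hyps l f Df ft Lft DLf u p L) (hω : 1 ≤ ω)
    (hp' : ∀ i, 1 ≤ i → i ≤ l → p i ≤ p') (hab : a ≤ b) (hx : ∀ t ∈ Set.Icc a b, ‖x t‖ ≤ B) :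
    ‖QV2 l Lft u p ω x a b‖ ≤ l * ((l + 1) * (ω ^ (p' + 1) * (L * B * (b - a) ^ 3))) := by
  have hLB : 0 ≤ L * B := mul_nonneg H.hLpos.le ((norm_nonneg _).trans (hx a ⟨le_rfl, hab⟩))
  set C := ω ^ (p' + 1) * (L * B * (b - a) ^ 3)
  have hC : 0 ≤ C := by
    have : 0 ≤ b - a := by linarith
    positivity
  refine (norm_sum_le_card_mul _ fun i hi =>
    norm_sum_le_card_mul (C := C) _ fun j hj => ?_).trans ?_
  · obtain ⟨hi, hil⟩ := mem_Ico.1 hi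
    have hjl := (mem_Icc.1 hj).2
    rw [norm_smul, Real.norm_eq_abs, abs_of_nonneg (by positivity)]
    refine mul_le_mul (rpow_le_rpow_of_exponent_le hω ?_)
      (norm_integral_smul_integral_smul_integral_le hab hLB (fun t => H.hubdd i hil.le _)
        (fun t => H.hubdd j hjl _) fun σ hσ => (H.hreg_Lft i j hil.le hjl).norm_le_mul
          H.hLpos.le (hx σ (Set.Ioc_subset_Icc_self hσ)) σ) (norm_nonneg _) (by positivity)
    linarith [hp' i hi hil.le, H.p_le_one hjl]
  · simp only [Nat.card_Icc, Nat.card_Ico, Nat.sub_zero, Nat.cast_add, Nat.cast_one]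
    gcongr
    exact_mod_cast Nat.sub_le l 1

lemma norm_Q1_le (H : Hyps l f Df ft Lft DLf u p L) (hω : 1 ≤ ω)
    (hp' : ∀ i, 1 ≤ i → i ≤ l → p i ≤ p') (hab : a ≤ b) (hxa : ‖x a‖ ≤ B) :
    ‖Q1 l f Df u p ω x a b‖ ≤ l * (ω ^ p' * (b - a) ^ 2 * (L * B)) := by
  refine norm_sum_Icc_le fun i hi hil => ?_
  have hV := abs_Vij_le (p := p) (ω := ω) hab (by linarith) (H.hubdd i hil) (H.hubdd 0 l.zero_le)
  rw [H.hp0, rpow_zero, mul_one] at hV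
  rw [norm_smul, Real.norm_eq_abs]
  refine mul_le_mul (hV.trans ?_) ((H.hreg_Lf i 0 hil l.zero_le).norm_le_mul H.hLpos.le hxa a)
    (norm_nonneg _) (by positivity)
  gcongr
  exact hp' i hi hil

lemma norm_Q1T_le (H : Hyps l f Df ft Lft DLf u p L) (hω : 1 ≤ ω)
    (hp' : ∀ i, 1 ≤ i → i ≤ l → p i ≤ p') (hab : a ≤ b) (hxa : ‖x a‖ ≤ B) :
    ‖Q1T l f Df u p ω x a b‖ ≤ (l ^ 2 + l) * ((ω ^ p' * (b - a)) ^ 2 * (L * B)) := by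
  have hLB : 0 ≤ L * B := mul_nonneg H.hLpos.le ((norm_nonneg _).trans hxa)
  have hC : 0 ≤ (ω ^ p' * (b - a)) ^ 2 * (L * B) := by positivity
  have hV := fun i hi hil => H.abs_Vi_le_of_exponent_le hω hp' hab (i := i) hi hil
  have hlie := fun i j hil hjl => (H.hreg_Lf i j hil hjl).norm_le_mul H.hLpos.le hxa a
  have hmixed : ‖∑ i ∈ Icc 1 l, ∑ j ∈ Ioc i l,
      (Vi u p ω i a b * Vi u p ω j a b) • lieDeriv f Df j i a (x a)‖
      ≤ l * (l * ((ω ^ p' * (b - a)) ^ 2 * (L * B))) :=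
    norm_sum_Icc_Ioc_le hC fun i j hi hij hjl => by
      rw [norm_smul, Real.norm_eq_abs, abs_mul, sq]
      exact mul_le_mul (mul_le_mul (hV i hi (hij.le.trans hjl)) (hV j (hi.trans hij.le) hjl)
        (abs_nonneg _) ((abs_nonneg _).trans (hV i hi (hij.le.trans hjl))))
        (hlie i j (hij.le.trans hjl) hjl) (norm_nonneg _) (by positivity)
  have hsquare : ‖∑ i ∈ Icc 1 l, (Vi u p ω i a b ^ 2) • lieDeriv f Df i i a (x a)‖
      ≤ l * ((ω ^ p' * (b - a)) ^ 2 * (L * B)) :=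
    norm_sum_Icc_le fun i hi hil => by
      rw [norm_smul, Real.norm_eq_abs, abs_pow]
      exact mul_le_mul (pow_le_pow_left₀ (abs_nonneg _) (hV i hi hil) 2) (hlie i i hil hil)
        (norm_nonneg _) (sq_nonneg _)
  refine (norm_add_le _ _).trans ?_
  rw [norm_smul, Real.norm_of_nonneg (by norm_num)]
  have : (0 : ℝ) ≤ l * ((ω ^ p' * (b - a)) ^ 2 * (L * B)) := by positivity
  nlinarith

lemma norm_Hterm_le (H : Hyps l f Df ft Lft DLf u p L) (hω : 1 ≤ ω)
    (hp' : ∀ i, 1 ≤ i → i ≤ l → p i ≤ p') (hab : a ≤ b) (hxa : ‖x a‖ ≤ B) :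
    ‖Hterm l f Df u p ω x a b‖
      ≤ l * (ω ^ p' * (b - a) * (L * B)) + l * (l * ((ω ^ p' * (b - a)) ^ 2 * (2 * (L * B)))) := by
  have hLB : 0 ≤ L * B := mul_nonneg H.hLpos.le ((norm_nonneg _).trans hxa)
  refine (norm_add_le _ _).trans (add_le_add (norm_sum_Icc_le fun i hi hil => ?_)
    (norm_sum_Icc_Ioc_le (by positivity) fun i j hi hij hjl => ?_))
  · rw [norm_smul, Real.norm_eq_abs]
    exact mul_le_mul (H.abs_Vi_le_of_exponent_le hω hp' hab hi hil)
      ((H.hreg_f i hil).norm_le_mul H.hLpos.le hxa a) (norm_nonneg _)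
      (mul_nonneg (by positivity) (by linarith))
  · rw [norm_smul, Real.norm_eq_abs]
    exact mul_le_mul
      (H.abs_Vij_le_of_exponent_le hω hp' hab (hi.trans hij.le) hjl hi (hij.le.trans hjl))
      (H.norm_lieBracket_le (hij.le.trans hjl) hjl hxa a) (norm_nonneg _) (sq_nonneg _)

lemma norm_Iterm_le (H : Hyps l f Df ft Lft DLf u p L) (hIC : InteractionCondition l f Df u p)
    (hω : 1 ≤ ω) (hab : a ≤ b) (hx : ∀ t ∈ Set.Icc a b, ‖x t‖ ≤ B) :
    ‖Iterm l f Df u p ω x a b‖ ≤ l * (l * (2 * π * (2 * (L * B)))) * (b - a) := by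
  have hLB : 0 ≤ L * B := mul_nonneg H.hLpos.le ((norm_nonneg _).trans (hx a ⟨le_rfl, hab⟩))
  refine norm_integral_le_mul_sub hab fun θ hθ =>
    norm_sum_Icc_Ioc_le (by positivity) fun i j hi hij hjl => ?_
  refine (H.norm_gammaCoeff_smul_le hIC hω hi hij hjl fun h => h θ (x θ)).trans ?_
  gcongr
  exact H.norm_lieBracket_le (hij.le.trans hjl) hjl (hx θ (Set.Ioc_subset_Icc_self hθ)) θ

lemma norm_RL1_le (H : Hyps l f Df ft Lft DLf u p L) (hIC : InteractionCondition l f Df u p)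
    (hω : 1 ≤ ω) (hab : a ≤ b) (hxa : ‖x a‖ ≤ B)
    (hK : ∀ θ ∈ Set.Icc a b, ‖x θ - x a‖ ≤ K * (θ - a)) :
    ‖RL1 l f Df u p ω x a b‖ ≤ l * (l * (2 * π * (2 * (L * (B + K) * (b - a)) * (b - a)))) := by
  -- for `a = b` the hypothesis `hK` says nothing about the sign of `K`
  rcases hab.eq_or_lt with rfl | hlt
  · simp [RL1]
  have hK0 : 0 ≤ K := by
    have := (norm_nonneg _).trans (hK b ⟨hab, le_rfl⟩)
    exact nonneg_of_mul_nonneg_left this (by linarith)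
  have hB0 : 0 ≤ B := (norm_nonneg _).trans hxa
  have hL := H.hLpos.le
  refine norm_sum_Icc_Ioc_le (by positivity) fun i j hi hij hjl => ?_
  refine (H.norm_gammaCoeff_smul_le hIC hω hi hij hjl fun h => by simp [h]).trans ?_
  gcongr
  refine norm_integral_le_mul_sub hab fun θ hθ => (H.norm_lieBracket_sub_le (hij.le.trans hjl) hjl
    hθ.1.le hxa (hK θ (Set.Ioc_subset_Icc_self hθ))).trans ?_
  gcongr
  exact hθ.2

end Hyps

lemma IsSSol.norm_sub_le (hsol : IsSSol l f u p ω x (Set.Icc t₀ t₁) t₀)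
    (H : Hyps l f Df ft Lft DLf u p L) (hω : 1 ≤ ω) (hp' : ∀ i, 1 ≤ i → i ≤ l → p i ≤ p')
    (hx : ∀ t ∈ Set.Icc t₀ t₁, ‖x t‖ ≤ B) (ha : t₀ ≤ a) (haθ : a ≤ θ) (hθ : θ ≤ t₁) :
    ‖x θ - x a‖ ≤ (1 + l * ω ^ p') * (L * B) * (θ - a) := by
  have hint : ∀ c ∈ Set.Icc t₀ t₁, IntervalIntegrable (sysField l f u p ω x) volume t₀ c :=
    fun c hc => H.intervalIntegrable_sysField <| hsol.1.mono <| by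
      rw [Set.uIcc_of_le hc.1]; exact Set.Icc_subset_Icc_right hc.2
  have hθI : θ ∈ Set.Icc t₀ t₁ := ⟨ha.trans haθ, hθ⟩
  have haI : a ∈ Set.Icc t₀ t₁ := ⟨ha, haθ.trans hθ⟩
  have hdiff : x θ - x a = ∫ τ in a..θ, sysField l f u p ω x τ := by
    rw [hsol.2 θ hθI, hsol.2 a haI, add_sub_add_left_eq_sub]
    exact integral_interval_sub_left (hint θ hθI) (hint a haI)
  rw [hdiff]
  exact norm_integral_le_mul_sub haθ fun τ hτ =>
    H.norm_sysField_le hω hp' (hx τ ⟨ha.trans hτ.1.le, hτ.2.trans hθ⟩)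

lemma norm_QV1_add_QV2_add_Q1_le (H : Hyps l f Df ft Lft DLf u p L) (hω : 1 ≤ ω)
    (hp' : ∀ i, 1 ≤ i → i ≤ l → p i ≤ p') (hab : a ≤ b) (hx : ∀ t ∈ Set.Icc a b, ‖x t‖ ≤ B)
    (hS : ω * (b - a) ≤ 2 * π) :
    ‖QV1 l ft u p ω x a b + QV2 l Lft u p ω x a b + Q1 l f Df u p ω x a b‖
      ≤ (4 * π * l + 4 * π ^ 2 * l * (l + 1)) * (L * B) * ω ^ (p' - 1) * (b - a) := by
  have hω0 : 0 < ω := by linarith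
  have hS0 : 0 ≤ b - a := by linarith
  have hLB : 0 ≤ L * B := mul_nonneg H.hLpos.le ((norm_nonneg _).trans (hx a ⟨le_rfl, hab⟩))
  have hWS : ω ^ p' * (b - a) ≤ 2 * π * ω ^ (p' - 1) := rpow_mul_le_of_mul_le hω0 hS
  have hW2 : ω ^ p' * (b - a) ^ 2 ≤ 2 * π * ω ^ (p' - 1) * (b - a) := by
    rw [sq, ← mul_assoc]; gcongr
  have hW3 : ω ^ (p' + 1) * (b - a) ^ 3 ≤ 4 * π ^ 2 * ω ^ (p' - 1) * (b - a) := by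
    rw [rpow_add hω0, rpow_one]
    calc ω ^ p' * ω * (b - a) ^ 3 = ω ^ p' * (b - a) * (ω * (b - a)) * (b - a) := by ring
      _ ≤ 2 * π * ω ^ (p' - 1) * (2 * π) * (b - a) := by gcongr
      _ = 4 * π ^ 2 * ω ^ (p' - 1) * (b - a) := by ring
  have hl : (0 : ℝ) ≤ l * (l + 1) * (L * B) := by positivity
  have h₁ := H.norm_QV1_le hω hp' hab hx
  have h₂ := H.norm_QV2_le hω hp' hab hx
  have h₃ := H.norm_Q1_le hω hp' hab (hx a ⟨le_rfl, hab⟩)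
  have h₁' : ‖QV1 l ft u p ω x a b‖ ≤ 2 * π * l * (L * B) * ω ^ (p' - 1) * (b - a) :=
    h₁.trans (by nlinarith [mul_le_mul_of_nonneg_left hW2 (mul_nonneg l.cast_nonneg hLB)])
  have h₂' : ‖QV2 l Lft u p ω x a b‖
      ≤ 4 * π ^ 2 * l * (l + 1) * (L * B) * ω ^ (p' - 1) * (b - a) :=
    h₂.trans (by nlinarith [mul_le_mul_of_nonneg_left hW3 hl])
  have h₃' : ‖Q1 l f Df u p ω x a b‖ ≤ 2 * π * l * (L * B) * ω ^ (p' - 1) * (b - a) :=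
    h₃.trans (by nlinarith [mul_le_mul_of_nonneg_left hW2 (mul_nonneg l.cast_nonneg hLB)])
  calc _ ≤ ‖QV1 l ft u p ω x a b‖ + ‖QV2 l Lft u p ω x a b‖ + ‖Q1 l f Df u p ω x a b‖ :=
        norm_add₃_le
    _ ≤ _ := by linarith

lemma norm_RL1_le_of_isSSol (H : Hyps l f Df ft Lft DLf u p L)
    (hIC : InteractionCondition l f Df u p) (hsol : IsSSol l f u p ω x (Set.Icc t₀ t₁) t₀)
    (hω : 1 ≤ ω) (hp' : ∀ i, 1 ≤ i → i ≤ l → p i ≤ p') (hp'0 : 0 ≤ p')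
    (hx : ∀ t ∈ Set.Icc t₀ t₁, ‖x t‖ ≤ B) (ha : t₀ ≤ a) (hab : a ≤ b) (hb : b ≤ t₁)
    (hS : ω * (b - a) ≤ 2 * π) :
    ‖RL1 l f Df u p ω x a b‖
      ≤ 8 * π ^ 2 * l ^ 2 * (1 + L + L * l) * (L * B) * ω ^ (p' - 1) * (b - a) := by
  have hL := H.hLpos.le
  have hxa := hx a ⟨ha, hab.trans hb⟩
  have hLB : 0 ≤ L * B := mul_nonneg hL ((norm_nonneg _).trans hxa)
  have hW : 1 ≤ ω ^ p' := one_le_rpow hω hp'0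
  have hWS : ω ^ p' * (b - a) ≤ 2 * π * ω ^ (p' - 1) := rpow_mul_le_of_mul_le (by linarith) hS
  set K := (1 + l * ω ^ p') * (L * B)
  have hK : ∀ θ ∈ Set.Icc a b, ‖x θ - x a‖ ≤ K * (θ - a) := fun θ hθ =>
    hsol.norm_sub_le H hω hp' hx ha hθ.1 (hθ.2.trans hb)
  have hLBK : L * (B + K) ≤ (1 + L + L * l) * (L * B) * ω ^ p' := by
    have : L * B + L * (L * B) ≤ (L * B + L * (L * B)) * ω ^ p' :=
      le_mul_of_one_le_right (by positivity) hW
    simp only [K]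
    linarith
  have hS0 : 0 ≤ b - a := by linarith
  have hmain : L * (B + K) * (b - a) ≤ (1 + L + L * l) * (L * B) * (2 * π * ω ^ (p' - 1)) :=
    calc L * (B + K) * (b - a) ≤ (1 + L + L * l) * (L * B) * ω ^ p' * (b - a) := by gcongr
      _ = (1 + L + L * l) * (L * B) * (ω ^ p' * (b - a)) := by ring
      _ ≤ _ := by gcongr
  refine (H.norm_RL1_le hIC hω hab hxa hK).trans ?_
  calc (l : ℝ) * (l * (2 * π * (2 * (L * (B + K) * (b - a)) * (b - a))))
      = 4 * π * l ^ 2 * (b - a) * (L * (B + K) * (b - a)) := by ring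
    _ ≤ 4 * π * l ^ 2 * (b - a) * ((1 + L + L * l) * (L * B) * (2 * π * ω ^ (p' - 1))) := by
        gcongr
    _ = _ := by ring

lemma norm_Q1T_add_Hterm_sub_Iterm_le (H : Hyps l f Df ft Lft DLf u p L)
    (hIC : InteractionCondition l f Df u p)
    (hω : 1 ≤ ω) (hp' : ∀ i, 1 ≤ i → i ≤ l → p i ≤ p') (hp'0 : 0 ≤ p') (hp'1 : p' ≤ 1)
    (hab : a ≤ b) (hx : ∀ t ∈ Set.Icc a b, ‖x t‖ ≤ B) (hS : ω * (b - a) ≤ 2 * π) :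
    ‖Q1T l f Df u p ω x a b + Hterm l f Df u p ω x a b - Iterm l f Df u p ω x a b‖
      ≤ tailConst l * (L * B) * ω ^ (p' - 1) := by
  have hxa := hx a ⟨le_rfl, hab⟩
  have hLB : 0 ≤ L * B := mul_nonneg H.hLpos.le ((norm_nonneg _).trans hxa)
  have hS0 : 0 ≤ b - a := by linarith
  have hw0 : 0 ≤ ω ^ (p' - 1) := by positivity
  have hw1 : ω ^ (p' - 1) ≤ 1 := rpow_le_one_of_one_le_of_nonpos hω (by linarith)
  have hWS : ω ^ p' * (b - a) ≤ 2 * π * ω ^ (p' - 1) := rpow_mul_le_of_mul_le (by linarith) hS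
  have hS' : b - a ≤ 2 * π * ω ^ (p' - 1) :=
    (le_mul_of_one_le_left hS0 (one_le_rpow hω hp'0)).trans hWS
  have hWS2 : (ω ^ p' * (b - a)) ^ 2 ≤ 4 * π ^ 2 * ω ^ (p' - 1) := by
    calc (ω ^ p' * (b - a)) ^ 2 ≤ (2 * π * ω ^ (p' - 1)) ^ 2 := by gcongr
      _ = 4 * π ^ 2 * ω ^ (p' - 1) * ω ^ (p' - 1) := by ring
      _ ≤ 4 * π ^ 2 * ω ^ (p' - 1) * 1 := by gcongr
      _ = _ := mul_one _
  have h₁ := H.norm_Q1T_le hω hp' hab hxa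
  have h₂ := H.norm_Hterm_le hω hp' hab hxa
  have h₃ := H.norm_Iterm_le hIC hω hab hx
  have hl : (0 : ℝ) ≤ l := l.cast_nonneg
  have h₁' := mul_le_mul_of_nonneg_left hWS2 (by positivity : (0 : ℝ) ≤ (l ^ 2 + l) * (L * B))
  have h₂' := mul_le_mul_of_nonneg_left hWS (by positivity : (0 : ℝ) ≤ l * (L * B))
  have h₂'' := mul_le_mul_of_nonneg_left hWS2 (by positivity : (0 : ℝ) ≤ l * l * (2 * (L * B)))
  have h₃' := mul_le_mul_of_nonneg_left hS' (by positivity : (0 : ℝ) ≤ l * l * (4 * π * (L * B)))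
  calc _ ≤ ‖Q1T l f Df u p ω x a b‖ + ‖Hterm l f Df u p ω x a b‖
        + ‖Iterm l f Df u p ω x a b‖ := norm_sub_le_of_le (norm_add_le _ _) le_rfl
    _ ≤ _ := by
      simp only [tailConst]
      nlinarith

lemma norm_window_le (H : Hyps l f Df ft Lft DLf u p L) (hIC : InteractionCondition l f Df u p)
    (hsol : IsSSol l f u p ω x (Set.Icc t₀ t₁) t₀) (hω : 1 ≤ ω)
    (hp' : ∀ i, 1 ≤ i → i ≤ l → p i ≤ p') (hp'0 : 0 ≤ p') (hx : ∀ t ∈ Set.Icc t₀ t₁, ‖x t‖ ≤ B)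
    (ha : t₀ ≤ a) (hab : a ≤ b) (hb : b ≤ t₁) (hS : ω * (b - a) ≤ 2 * π) :
    ‖QV1 l ft u p ω x a b + QV2 l Lft u p ω x a b + Q1 l f Df u p ω x a b
        + RL1 l f Df u p ω x a b‖ ≤ windowConst l L * (L * B) * ω ^ (p' - 1) * (b - a) :=
  (norm_add_le _ _).trans <| (add_le_add
    (norm_QV1_add_QV2_add_Q1_le H hω hp' hab
      (fun t ht => hx t ⟨ha.trans ht.1, ht.2.trans hb⟩) hS)
    (norm_RL1_le_of_isSSol H hIC hsol hω hp' hp'0 hx ha hab hb hS)).trans_eq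
    (by simp only [windowConst]; ring)

lemma norm_tail_le (H : Hyps l f Df ft Lft DLf u p L) (hIC : InteractionCondition l f Df u p)
    (hω : 1 ≤ ω) (hp' : ∀ i, 1 ≤ i → i ≤ l → p i ≤ p') (hp'0 : 0 ≤ p') (hp'1 : p' ≤ 1)
    (hab : a ≤ b) (hx : ∀ t ∈ Set.Icc a b, ‖x t‖ ≤ B) (hS : ω * (b - a) ≤ 2 * π) :
    ‖QV1 l ft u p ω x a b + QV2 l Lft u p ω x a b + Q1 l f Df u p ω x a b
        + (Q1T l f Df u p ω x a b + Hterm l f Df u p ω x a b - Iterm l f Df u p ω x a b)‖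
      ≤ windowConst l L * (L * B) * ω ^ (p' - 1) * (b - a)
        + tailConst l * (L * B) * ω ^ (p' - 1) := by
  have hLB : 0 ≤ L * B := mul_nonneg H.hLpos.le ((norm_nonneg _).trans (hx a ⟨le_rfl, hab⟩))
  have hc : 4 * π * l + 4 * π ^ 2 * l * (l + 1) ≤ windowConst l L := by
    have : 0 ≤ 8 * π ^ 2 * l ^ 2 * (1 + L + L * l) := by have := H.hLpos; positivity
    simp only [windowConst]
    linarith
  have hS0 : 0 ≤ b - a := by linarith
  refine (norm_add_le _ _).trans (add_le_add ((norm_QV1_add_QV2_add_Q1_le H hω hp' hab hx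
    hS).trans ?_) (norm_Q1T_add_Hterm_sub_Iterm_le H hIC hω hp' hp'0 hp'1 hab hx hS))
  gcongr

lemma norm_RT1_le (H : Hyps l f Df ft Lft DLf u p L) (hIC : InteractionCondition l f Df u p)
    (hsol : IsSSol l f u p ω x (Set.Icc t₀ t₁) t₀) (hω : 1 ≤ ω)
    (hp' : ∀ i, 1 ≤ i → i ≤ l → p i ≤ p') (hp'0 : 0 ≤ p') (hp'1 : p' ≤ 1) (ht : t₀ ≤ t₁)
    (hx : ∀ t ∈ Set.Icc t₀ t₁, ‖x t‖ ≤ B) :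
    ‖RT1 l f Df ft Lft u p ω x t₀ t₁‖
      ≤ L * B * ω ^ (p' - 1) * (windowConst l L * (t₁ - t₀) + tailConst l) := by
  have hω0 : 0 < ω := by linarith
  set T := 2 * π / ω
  have hT : 0 < T := by positivity
  have hωT : ω * T = 2 * π := by simp only [T]; field_simp
  obtain ⟨hrT, hlast⟩ := natFloor_div_mul_le_and_sub_le (sub_nonneg.2 ht) hT
  set r := ⌊(t₁ - t₀) / T⌋₊
  set tq : ℕ → ℝ := fun q => t₀ + q * T
  have hwin : ∀ q ∈ range r,
      ‖QV1 l ft u p ω x (tq q) (tq (q + 1)) + QV2 l Lft u p ω x (tq q) (tq (q + 1))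
        + Q1 l f Df u p ω x (tq q) (tq (q + 1)) + RL1 l f Df u p ω x (tq q) (tq (q + 1))‖
      ≤ windowConst l L * (L * B) * ω ^ (p' - 1) * T := fun q hq => by
    have hq : (q : ℝ) + 1 ≤ r := by exact_mod_cast mem_range.1 hq
    have hlen : tq (q + 1) - tq q = T := by simp only [tq]; push_cast; ring
    rw [← hlen]
    refine norm_window_le H hIC hsol hω hp' hp'0 hx ?_ ?_ ?_ (by rw [hlen, hωT])
    · simp only [tq]; exact le_add_of_nonneg_right (by positivity)
    · linarith
    · simp only [tq]; push_cast; nlinarith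
  have hr : t₀ ≤ tq r ∧ tq r ≤ t₁ := by constructor <;> simp only [tq] <;> nlinarith
  have hS : ω * (t₁ - tq r) ≤ 2 * π := by
    rw [← hωT]; gcongr; simp only [tq]; linarith
  have hsum := norm_sum_le_card_mul _ hwin
  rw [card_range] at hsum
  have htail := norm_tail_le H hIC hω hp' hp'0 hp'1 hr.2
    (fun t ht => hx t ⟨hr.1.trans ht.1, ht.2⟩) hS
  have hsplit : ∀ s i a b c d e : E n,
      s - i + a + b + c + d + e = s + (a + b + c + (d + e - i)) := fun _ _ _ _ _ _ _ => by abel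
  simp only [RT1]
  rw [hsplit]
  calc _ ≤ _ := norm_add_le _ _
    _ ≤ _ := add_le_add hsum htail
    _ = _ := by simp only [tq]; ring

end System

/-- **Bound on `R_{T1}`** (Lemma 14): there are constants `c₁, c₂ > 0` depending only on
`l` and `L` such that `‖R_{T1}(t₀,t₁)‖ ≤ Λ₁ ‖x₀‖ ω₁^{p′−1} (c₁ (t₁ − t₀) + c₂)`. -/
theorem bound_RT1 (l : ℕ) (L : ℝ) (hL : 0 < L) :
    ∃ c₁ c₂ : ℝ, 0 < c₁ ∧ 0 < c₂ ∧
      ∀ (n : ℕ)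
        (f : ℕ → ℝ → E n → E n)
        (Df : ℕ → ℝ → E n → (E n →L[ℝ] E n))
        (ft : ℕ → ℝ → E n → E n)
        (Lft : ℕ → ℕ → ℝ → E n → E n)
        (DLf : ℕ → ℕ → ℝ → E n → (E n →L[ℝ] E n))
        (u : ℕ → ℝ → ℝ) (p : ℕ → ℝ),
        Hyps l f Df ft Lft DLf u p L →
        InteractionCondition l f Df u p →
        ∀ (t₀ t₁ ω₁ Λ₁ : ℝ) (x₀ : E n) (x : ℝ → E n),
          t₀ < t₁ → 1 ≤ ω₁ → 1 ≤ Λ₁ →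
          x t₀ = x₀ →
          IsSSol l f u p ω₁ x (Set.Icc t₀ t₁) t₀ →
          (∀ t ∈ Set.Icc t₀ t₁, ‖x t‖ ≤ Λ₁ * ‖x₀‖) →
          ∀ p' : ℝ,
            (∀ i, 1 ≤ i → i ≤ l → p i ≤ p') →
            (∃ i, 1 ≤ i ∧ i ≤ l ∧ p i = p') →
            ‖RT1 l f Df ft Lft u p ω₁ x t₀ t₁‖
              ≤ Λ₁ * ‖x₀‖ * ω₁ ^ (p' - 1) * (c₁ * (t₁ - t₀) + c₂) := by
  refine ⟨L * windowConst l L + 1, L * tailConst l + 1,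
    by have := windowConst_nonneg l hL.le; positivity,
    by have := tailConst_nonneg l; positivity, ?_⟩
  intro n f Df ft Lft DLf u p H hIC t₀ t₁ ω₁ Λ₁ x₀ x ht hω _ _ hsol hx p' hp' ⟨i, hi, hil, hpi⟩
  have hp'0 : 0 ≤ p' := hpi ▸ (H.hp i hi hil).1.le
  have hp'1 : p' ≤ 1 := hpi ▸ (H.hp i hi hil).2.le
  refine (norm_RT1_le H hIC hsol hω hp' hp'0 hp'1 ht.le hx).trans ?_
  have hS : 0 ≤ t₁ - t₀ := by linarith
  calc L * (Λ₁ * ‖x₀‖) * ω₁ ^ (p' - 1) * (windowConst l L * (t₁ - t₀) + tailConst l)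
      = Λ₁ * ‖x₀‖ * ω₁ ^ (p' - 1) * (L * windowConst l L * (t₁ - t₀) + L * tailConst l) := by ring
    _ ≤ _ := by gcongr <;> linarith
end

section
/- Bound on R: Under the setup assumptions, define R(t_s, t_e) := ∑_{1≤i≤l, 0≤j,m≤l} ω₁^{p_i+p_j+p_m} ∫_{t_s}^{t_e} u_i(ω₁θ) ∫_{t_s}^{θ} u_j(ω₁τ) ∫_{t_s}^{τ} L_{f_m}L_{f_j}f_i(σ, x(σ)) u_m(ω₁σ) dσ dτ dθ. Then ‖R(t_s, t_e)‖ ≤ (2/3) π² (l+1)³ L Λ₁ ‖x₀‖ ω₁^{p‴−2} T₁, where p‴ := max{ p_i + p_j + p_m : 1 ≤ i ≤ l, 0 ≤ j, m ≤ l, p_i + p_j + p_m < 2 }. -/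
open MeasureTheory Real Filter

/-!
Every summand of `R` is a triple iterated integral of a vector field bounded by
`L Λ₁ ‖x₀‖` along the solution, against dithers bounded by `1`; integrating the bound three
times over an interval of length at most `T₁` gives `L Λ₁ ‖x₀‖ T₁³ / 6`, and the frequency
factor `ω₁^{p_i+p_j+p_m}` is at most `ω₁^{p‴}` since `ω₁ ≥ 1`. There are at most `(l+1)³` summands.
-/

open Finset

theorem RegVF.norm_le_s13 {n : ℕ} {L : ℝ} {g : ℝ → E n → E n} (hg : RegVF L g) (t : ℝ)
    (y : E n) : ‖g t y‖ ≤ L * ‖y‖ := by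
  simpa [hg.2.2 t] using hg.2.1 t y 0

theorem integral_mul_pow_sub_div_factorial (C a b : ℝ) (k : ℕ) :
    ∫ σ in a..b, C * (σ - a) ^ k / k.factorial
      = C * (b - a) ^ (k + 1) / (k + 1).factorial := by
  rw [intervalIntegral.integral_div, intervalIntegral.integral_const_mul,
    intervalIntegral.integral_comp_sub_right (fun σ => σ ^ k), sub_self, integral_pow,
    Nat.factorial_succ]
  push_cast
  field_simp
  ring

section IteratedIntegral

variable {V : Type*} [NormedAddCommGroup V] [NormedSpace ℝ V]

theorem norm_integral_smul_le_of_norm_le_pow {a b C : ℝ} {k : ℕ} {v : ℝ → ℝ} {F : ℝ → V}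
    (hab : a ≤ b) (hv : ∀ t, |v t| ≤ 1)
    (hF : ∀ σ ∈ Set.Icc a b, ‖F σ‖ ≤ C * (σ - a) ^ k / k.factorial) :
    ‖∫ σ in a..b, v σ • F σ‖ ≤ C * (b - a) ^ (k + 1) / (k + 1).factorial := by
  rw [← integral_mul_pow_sub_div_factorial]
  refine intervalIntegral.norm_integral_le_of_norm_le hab
    (Filter.Eventually.of_forall fun σ hσ => ?_)
    ((by fun_prop : Continuous _).intervalIntegrable _ _)
  rw [norm_smul, Real.norm_eq_abs]
  exact (mul_le_of_le_one_left (norm_nonneg _) (hv σ)).trans (hF σ (Set.Ioc_subset_Icc_self hσ))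

theorem norm_integral_smul_integral_smul_integral_smul_le {a b C : ℝ} {u v w : ℝ → ℝ}
    {g : ℝ → V} (hab : a ≤ b) (hu : ∀ t, |u t| ≤ 1) (hv : ∀ t, |v t| ≤ 1)
    (hw : ∀ t, |w t| ≤ 1) (hg : ∀ σ ∈ Set.Icc a b, ‖g σ‖ ≤ C) :
    ‖∫ θ in a..b, u θ • ∫ τ in a..θ, v τ • ∫ σ in a..τ, w σ • g σ‖ ≤ C * (b - a) ^ 3 / 6 := by
  have hsub {s : ℝ} (hs : s ∈ Set.Icc a b) : Set.Icc a s ⊆ Set.Icc a b :=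
    Set.Icc_subset_Icc_right hs.2
  have h₁ : ∀ τ ∈ Set.Icc a b, ‖∫ σ in a..τ, w σ • g σ‖ ≤ C * (τ - a) ^ 1 / (1 : ℕ).factorial :=
    fun τ hτ => norm_integral_smul_le_of_norm_le_pow (k := 0) hτ.1 hw
      fun σ hσ => by simpa using hg σ (hsub hτ hσ)
  have h₂ : ∀ θ ∈ Set.Icc a b, ‖∫ τ in a..θ, v τ • ∫ σ in a..τ, w σ • g σ‖
      ≤ C * (θ - a) ^ 2 / (2 : ℕ).factorial :=
    fun θ hθ => norm_integral_smul_le_of_norm_le_pow hθ.1 hv fun τ hτ => h₁ τ (hsub hθ hτ)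
  simpa [Nat.factorial] using norm_integral_smul_le_of_norm_le_pow hab hu h₂

end IteratedIntegral

theorem norm_sum_Icc_sum_Icc_sum_Icc_le {V : Type*} [SeminormedAddCommGroup V] (l : ℕ)
    {F : ℕ → ℕ → ℕ → V} {B : ℝ} (hB₀ : 0 ≤ B)
    (hB : ∀ i ∈ Icc 1 l, ∀ j ∈ Icc 0 l, ∀ m ∈ Icc 0 l, ‖F i j m‖ ≤ B) :
    ‖∑ i ∈ Icc 1 l, ∑ j ∈ Icc 0 l, ∑ m ∈ Icc 0 l, F i j m‖ ≤ ((l : ℝ) + 1) ^ 3 * B := by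
  calc ‖∑ i ∈ Icc 1 l, ∑ j ∈ Icc 0 l, ∑ m ∈ Icc 0 l, F i j m‖
      ≤ ∑ i ∈ Icc 1 l, ∑ j ∈ Icc 0 l, ∑ m ∈ Icc 0 l, B := by
        refine (norm_sum_le _ _).trans (sum_le_sum fun i hi => ?_)
        refine (norm_sum_le _ _).trans (sum_le_sum fun j hj => ?_)
        exact (norm_sum_le _ _).trans (sum_le_sum fun m hm => hB i hi j hj m hm)
    _ = (l : ℝ) * ((l + 1) * ((l + 1) * B)) := by simp [sum_const]
    _ ≤ ((l : ℝ) + 1) ^ 3 * B := by nlinarith [show (0 : ℝ) ≤ (l + 1) ^ 2 * B by positivity]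

theorem rpow_mul_div_pow_three_eq {ω : ℝ} (hω : 0 < ω) (q c : ℝ) :
    ω ^ q * (c * (2 * π / ω) ^ 3 / 6) = (2 / 3) * π ^ 2 * c * ω ^ (q - 2) * (2 * π / ω) := by
  rw [Real.rpow_sub hω, Real.rpow_two]
  field_simp
  ring

theorem bound_R_general
    {n : ℕ} (l : ℕ)
    (f : ℕ → ℝ → E n → E n)
    (Df : ℕ → ℝ → E n → (E n →L[ℝ] E n))
    (ft : ℕ → ℝ → E n → E n)
    (Lft : ℕ → ℕ → ℝ → E n → E n)
    (DLf : ℕ → ℕ → ℝ → E n → (E n →L[ℝ] E n))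
    (u : ℕ → ℝ → ℝ) (p : ℕ → ℝ) (L : ℝ)
    (hyp : Hyps l f Df ft Lft DLf u p L)
    -- setup: a bounded solution of (S) with frequency `ω₁ ≥ 1` on `[t₀, t₁]`
    (t₀ t₁ ω₁ Λ₁ : ℝ) (x₀ : E n) (x : ℝ → E n)
    (hω₁ : 1 ≤ ω₁)
    (hxb : ∀ t ∈ Set.Icc t₀ t₁, ‖x t‖ ≤ Λ₁ * ‖x₀‖)
    -- `p‴ = max { p_i + p_j + p_m : 1 ≤ i ≤ l, 0 ≤ j, m ≤ l, p_i + p_j + p_m < 2 }`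
    (p3 : ℝ)
    (hp3ub : ∀ i j m, 1 ≤ i → i ≤ l → j ≤ l → m ≤ l → p i + p j + p m ≤ p3)
    -- `t_s ∈ [t₀, t_r]` and `t_e ∈ [t_s, min (t_s + T₁) t₁]`, where `T₁ = 2π/ω₁`
    (ts te : ℝ)
    (hts : ts ∈ Set.Icc t₀ (t₀ + (⌊(t₁ - t₀) / (2 * π / ω₁)⌋₊ : ℝ) * (2 * π / ω₁)))
    (hte : te ∈ Set.Icc ts (min (ts + 2 * π / ω₁) t₁)) :
    ‖Rrem l f Df DLf u p ω₁ x ts te‖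
      ≤ (2/3) * π ^ 2 * ((l : ℝ) + 1) ^ 3 * L * Λ₁ * ‖x₀‖ * ω₁ ^ (p3 - 2) * (2 * π / ω₁) := by
  have hω₀ : 0 < ω₁ := one_pos.trans_le hω₁
  have hsub : Set.Icc ts te ⊆ Set.Icc t₀ t₁ := fun s hs =>
    ⟨hts.1.trans hs.1, hs.2.trans (hte.2.trans (min_le_right _ _))⟩
  have hlen : te - ts ≤ 2 * π / ω₁ := by linarith [hte.2.trans (min_le_left _ _)]
  set C := L * (Λ₁ * ‖x₀‖)
  have hC : 0 ≤ C :=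
    mul_nonneg hyp.hLpos.le ((norm_nonneg _).trans (hxb ts (hsub ⟨le_rfl, hte.1⟩)))
  have hterm : ∀ i ∈ Icc 1 l, ∀ j ∈ Icc 0 l, ∀ m ∈ Icc 0 l,
      ‖ω₁ ^ (p i + p j + p m) • ∫ θ in ts..te, u i (ω₁ * θ) • ∫ τ in ts..θ, u j (ω₁ * τ) •
        ∫ σ in ts..τ, u m (ω₁ * σ) • lieDeriv2 f Df DLf m j i σ (x σ)‖
        ≤ ω₁ ^ p3 * (C * (te - ts) ^ 3 / 6) := by
    intro i hi j hj m hm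
    simp only [mem_Icc] at hi hj hm
    rw [norm_smul, Real.norm_of_nonneg (by positivity)]
    refine mul_le_mul (Real.rpow_le_rpow_of_exponent_le hω₁ (hp3ub i j m hi.1 hi.2 hj.2 hm.2))
      (norm_integral_smul_integral_smul_integral_smul_le hte.1 (fun _ => hyp.hubdd i hi.2 _)
        (fun _ => hyp.hubdd j hj.2 _) (fun _ => hyp.hubdd m hm.2 _) fun σ hσ => ?_)
      (norm_nonneg _) (by positivity)
    exact ((hyp.hreg_LLf i j m hi.2 hj.2 hm.2).norm_le_s13 σ (x σ)).trans
      (mul_le_mul_of_nonneg_left (hxb σ (hsub hσ)) hyp.hLpos.le)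
  calc ‖Rrem l f Df DLf u p ω₁ x ts te‖
      ≤ ((l : ℝ) + 1) ^ 3 * (ω₁ ^ p3 * (C * (te - ts) ^ 3 / 6)) :=
        norm_sum_Icc_sum_Icc_sum_Icc_le l (by have := hte.1; positivity) hterm
    _ ≤ ((l : ℝ) + 1) ^ 3 * (ω₁ ^ p3 * (C * (2 * π / ω₁) ^ 3 / 6)) := by
        have := hte.1; gcongr
    _ = _ := by rw [rpow_mul_div_pow_three_eq hω₀]; ring

/-- **Bound on `R`** (Lemma 15). -/
theorem bound_R
    {n : ℕ} (l : ℕ)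
    (f : ℕ → ℝ → E n → E n)
    (Df : ℕ → ℝ → E n → (E n →L[ℝ] E n))
    (ft : ℕ → ℝ → E n → E n)
    (Lft : ℕ → ℕ → ℝ → E n → E n)
    (DLf : ℕ → ℕ → ℝ → E n → (E n →L[ℝ] E n))
    (u : ℕ → ℝ → ℝ) (p : ℕ → ℝ) (L : ℝ)
    (hyp : Hyps l f Df ft Lft DLf u p L)
    -- every triple of powers sums to less than `2`
    (hsum2 : ∀ i j m, 1 ≤ i → i ≤ l → j ≤ l → m ≤ l → p i + p j + p m < 2)
    -- setup: a bounded solution of (S) with frequency `ω₁ ≥ 1` on `[t₀, t₁]`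
    (t₀ t₁ ω₁ Λ₁ : ℝ) (x₀ : E n) (x : ℝ → E n)
    (h01 : t₀ < t₁) (hω₁ : 1 ≤ ω₁) (hΛ₁ : 1 ≤ Λ₁)
    (hx0 : x t₀ = x₀)
    (hsol : IsSSol l f u p ω₁ x (Set.Icc t₀ t₁) t₀)
    (hxb : ∀ t ∈ Set.Icc t₀ t₁, ‖x t‖ ≤ Λ₁ * ‖x₀‖)
    -- `p‴ = max { p_i + p_j + p_m : 1 ≤ i ≤ l, 0 ≤ j, m ≤ l, p_i + p_j + p_m < 2 }`
    (p3 : ℝ)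
    (hp3ub : ∀ i j m, 1 ≤ i → i ≤ l → j ≤ l → m ≤ l → p i + p j + p m ≤ p3)
    (hp3mem : ∃ i j m, 1 ≤ i ∧ i ≤ l ∧ j ≤ l ∧ m ≤ l ∧ p i + p j + p m = p3)
    -- `t_s ∈ [t₀, t_r]` and `t_e ∈ [t_s, min (t_s + T₁) t₁]`, where `T₁ = 2π/ω₁`
    (ts te : ℝ)
    (hts : ts ∈ Set.Icc t₀ (t₀ + (⌊(t₁ - t₀) / (2 * π / ω₁)⌋₊ : ℝ) * (2 * π / ω₁)))
    (hte : te ∈ Set.Icc ts (min (ts + 2 * π / ω₁) t₁)) :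
    ‖Rrem l f Df DLf u p ω₁ x ts te‖
      ≤ (2/3) * π ^ 2 * ((l : ℝ) + 1) ^ 3 * L * Λ₁ * ‖x₀‖ * ω₁ ^ (p3 - 2) * (2 * π / ω₁) :=
  bound_R_general l f Df ft Lft DLf u p L hyp t₀ t₁ ω₁ Λ₁ x₀ x hω₁ hxb p3 hp3ub ts te hts hte
end

section
/- Lipschitz properties I (example system): Let a ∈ ℝ, b ∈ ℝ \ {0} and k > 0. Define f₀, f₁, f₂ : ℝ → ℝ by f₀(x) := a x, f₁(x) := b √k |x| sin(log(x²/2)) for x ≠ 0 with f₁(0) := 0, and f₂(x) := b √k |x| cos(log(x²/2)) for x ≠ 0 with f₂(0) := 0. Then f₀ is globally Lipschitz with constant L₀ := |a|, and f₁ and f₂ are globally Lipschitz with constant L₁ = L₂ := 3|b|√k; moreover f_i(0) = 0 for i ∈ {0,1,2}. -/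
open Real Set NNReal

/-! Let `|T| ≤ A` and `|T'| ≤ B`. For `x > 0` the function `g x = x * T (log (x² / c))` has
derivative `T L + 2 T' L` with `L = log (x² / c)`, since the factor `x` cancels the derivative
`2 / x` of the logarithm; so the mean value theorem makes `g` `(A + 2B)`-Lipschitz on `(0, ∞)`.
As `|g x| ≤ A |x|`, `g` is continuous at `0` and the bound extends to `[0, ∞)`. The even function
`|x| * T (log (x² / c)) = g |x|` inherits the constant because `|·|` is `1`-Lipschitz. -/

section MulCompLogSqDiv

variable {T T' : ℝ → ℝ} {A B : ℝ≥0} {c : ℝ}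

theorem hasDerivAt_mul_comp_log_sq_div (hT : ∀ t, HasDerivAt T (T' t) t) (hc : c ≠ 0)
    {x : ℝ} (hx : x ≠ 0) :
    HasDerivAt (fun x => x * T (log (x ^ 2 / c)))
      (T (log (x ^ 2 / c)) + 2 * T' (log (x ^ 2 / c))) x := by
  have hlog : HasDerivAt (fun x => log (x ^ 2 / c)) (2 / x) x := by
    convert ((hasDerivAt_pow 2 x).div_const c).log (by positivity) using 1
    field_simp
    norm_num
  refine ((hasDerivAt_id' x).mul ((hT _).comp x hlog)).congr_deriv ?_
  simp only [Function.comp_apply]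
  field_simp

theorem lipschitzOnWith_mul_comp_log_sq_div_Ioi (hT : ∀ t, HasDerivAt T (T' t) t)
    (hTA : ∀ t, |T t| ≤ A) (hT'B : ∀ t, |T' t| ≤ B) (hc : c ≠ 0) :
    LipschitzOnWith (A + 2 * B) (fun x => x * T (log (x ^ 2 / c))) (Ioi 0) := by
  refine (convex_Ioi 0).lipschitzOnWith_of_nnnorm_hasDerivWithin_le
    (fun x hx => (hasDerivAt_mul_comp_log_sq_div hT hc hx.ne').hasDerivWithinAt) fun x _ => ?_
  rw [← NNReal.coe_le_coe, coe_nnnorm, Real.norm_eq_abs]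
  calc |T (log (x ^ 2 / c)) + 2 * T' (log (x ^ 2 / c))|
      ≤ |T (log (x ^ 2 / c))| + 2 * |T' (log (x ^ 2 / c))| := by
        simpa [abs_mul] using abs_add_le (T (log (x ^ 2 / c))) (2 * T' (log (x ^ 2 / c)))
    _ ≤ A + 2 * B := by gcongr <;> simp [hTA, hT'B]

theorem continuousOn_mul_comp_log_sq_div_Ici (hT : ∀ t, HasDerivAt T (T' t) t)
    (hTA : ∀ t, |T t| ≤ A) (hc : c ≠ 0) :
    ContinuousOn (fun x => x * T (log (x ^ 2 / c))) (Ici 0) := by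
  intro x hx
  rcases (mem_Ici.mp hx).eq_or_lt with rfl | hx
  · refine (continuousAt_of_locally_lipschitz zero_lt_one A fun y _ => ?_).continuousWithinAt
    simpa [Real.dist_eq, abs_mul, mul_comm] using
      mul_le_mul_of_nonneg_left (hTA (log (y ^ 2 / c))) (abs_nonneg y)
  · exact (hasDerivAt_mul_comp_log_sq_div hT hc hx.ne').continuousAt.continuousWithinAt

theorem lipschitzWith_abs_mul_comp_log_sq_div (hT : ∀ t, HasDerivAt T (T' t) t)
    (hTA : ∀ t, |T t| ≤ A) (hT'B : ∀ t, |T' t| ≤ B) (hc : c ≠ 0) :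
    LipschitzWith (A + 2 * B) (fun x => |x| * T (log (x ^ 2 / c))) := by
  have hIci : LipschitzOnWith (A + 2 * B) (fun x => x * T (log (x ^ 2 / c))) (Ici 0) := by
    rw [← closure_Ioi]
    exact (lipschitzOnWith_mul_comp_log_sq_div_Ioi hT hTA hT'B hc).closure
      (closure_Ioi (0 : ℝ) ▸ continuousOn_mul_comp_log_sq_div_Ici hT hTA hc)
  refine LipschitzWith.of_dist_le_mul fun x y => ?_
  have := hIci.dist_le_mul |x| (abs_nonneg x) |y| (abs_nonneg y)
  simp only [sq_abs, Real.dist_eq] at this ⊢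
  exact this.trans (mul_le_mul_of_nonneg_left (abs_abs_sub_abs_le_abs_sub x y) (by positivity))

end MulCompLogSqDiv

theorem LipschitzWith.abs_sub_le_of_eq_const_mul {f g : ℝ → ℝ} {K : ℝ≥0} (hg : LipschitzWith K g)
    {c : ℝ} (hf : ∀ x, f x = c * g x) (x y : ℝ) : |f x - f y| ≤ K * |c| * |x - y| := by
  rw [hf, hf, ← mul_sub, abs_mul, mul_comm (K : ℝ), mul_assoc]
  exact mul_le_mul_of_nonneg_left (hg.dist_le_mul x y) (abs_nonneg c)

theorem ite_zero_mul_abs_mul (c x t : ℝ) :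
    (if x = 0 then 0 else c * |x| * t) = c * (|x| * t) := by
  split_ifs with h <;> simp [h, mul_assoc]

theorem lipschitz_properties_I_general
    (a b k : ℝ)
    (f₀ f₁ f₂ : ℝ → ℝ)
    (hf₀ : ∀ x, f₀ x = a * x)
    (hf₁ : ∀ x, f₁ x =
      if x = 0 then 0 else b * Real.sqrt k * |x| * Real.sin (Real.log (x ^ 2 / 2)))
    (hf₂ : ∀ x, f₂ x =
      if x = 0 then 0 else b * Real.sqrt k * |x| * Real.cos (Real.log (x ^ 2 / 2))) :
    (∀ x y : ℝ, |f₀ x - f₀ y| ≤ |a| * |x - y|) ∧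
    (∀ x y : ℝ, |f₁ x - f₁ y| ≤ 3 * |b| * Real.sqrt k * |x - y|) ∧
    (∀ x y : ℝ, |f₂ x - f₂ y| ≤ 3 * |b| * Real.sqrt k * |x - y|) ∧
    f₀ 0 = 0 ∧ f₁ 0 = 0 ∧ f₂ 0 = 0 := by
  have hsin : LipschitzWith 3 fun x => |x| * sin (log (x ^ 2 / 2)) := by
    convert lipschitzWith_abs_mul_comp_log_sq_div (A := 1) (B := 1) hasDerivAt_sin
      (by simpa using abs_sin_le_one) (by simpa using abs_cos_le_one) two_ne_zero
    norm_num
  have hcos : LipschitzWith 3 fun x => |x| * cos (log (x ^ 2 / 2)) := by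
    convert lipschitzWith_abs_mul_comp_log_sq_div (A := 1) (B := 1) hasDerivAt_cos
      (by simpa using abs_cos_le_one) (by simpa using abs_sin_le_one) two_ne_zero
    norm_num
  have habs : |b * √k| = |b| * √k := by rw [abs_mul, abs_of_nonneg (sqrt_nonneg k)]
  refine ⟨fun x y => ?_, fun x y => ?_, fun x y => ?_, by simp [hf₀], by simp [hf₁], by simp [hf₂]⟩
  · rw [hf₀, hf₀, ← mul_sub, abs_mul]
  · simpa [habs, mul_assoc] using hsin.abs_sub_le_of_eq_const_mul
      (fun x => (hf₁ x).trans (ite_zero_mul_abs_mul _ _ _)) x y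
  · simpa [habs, mul_assoc] using hcos.abs_sub_le_of_eq_const_mul
      (fun x => (hf₂ x).trans (ite_zero_mul_abs_mul _ _ _)) x y

/-- **Lipschitz properties I** (example system, Lemma 16): the vector fields
`f₀(x) = a x`, `f₁(x) = b√k |x| sin(log(x²/2))`, `f₂(x) = b√k |x| cos(log(x²/2))`
(extended by `0` at `x = 0`) are globally Lipschitz with constants
`L₀ = |a|` and `L₁ = L₂ = 3|b|√k`, and vanish at the origin. -/
theorem lipschitz_properties_I
    (a b k : ℝ) (hb : b ≠ 0) (hk : 0 < k)
    (f₀ f₁ f₂ : ℝ → ℝ)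
    (hf₀ : ∀ x, f₀ x = a * x)
    (hf₁ : ∀ x, f₁ x =
      if x = 0 then 0 else b * Real.sqrt k * |x| * Real.sin (Real.log (x ^ 2 / 2)))
    (hf₂ : ∀ x, f₂ x =
      if x = 0 then 0 else b * Real.sqrt k * |x| * Real.cos (Real.log (x ^ 2 / 2))) :
    (∀ x y : ℝ, |f₀ x - f₀ y| ≤ |a| * |x - y|) ∧
    (∀ x y : ℝ, |f₁ x - f₁ y| ≤ 3 * |b| * Real.sqrt k * |x - y|) ∧
    (∀ x y : ℝ, |f₂ x - f₂ y| ≤ 3 * |b| * Real.sqrt k * |x - y|) ∧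
    f₀ 0 = 0 ∧ f₁ 0 = 0 ∧ f₂ 0 = 0 :=
  lipschitz_properties_I_general a b k f₀ f₁ f₂ hf₀ hf₁ hf₂
end

section
/- Lipschitz properties II (example system): Let a ∈ ℝ, b ∈ ℝ \ {0} and k > 0, and let f₀(x) := a x, f₁(x) := b √k |x| sin(log(x²/2)) for x ≠ 0 with f₁(0) := 0, and f₂(x) := b √k |x| cos(log(x²/2)) for x ≠ 0 with f₂(0) := 0. For i, j ∈ {0,1,2} define the Lie derivative L_{f_j}f_i : ℝ → ℝ by L_{f_j}f_i(x) := f_i′(x) · f_j(x) for x ≠ 0 (where f_i′ denotes the classical derivative, which exists for all x ≠ 0) and L_{f_j}f_i(0) := 0. Then each L_{f_j}f_i is globally Lipschitz with constant L_{ij} := 6|b|√k · L_j + L_i L_j, where L₀ := |a| and L₁ = L₂ := 3|b|√k; moreover L_{f_j}f_i(0) = 0. -/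
/-!
On either half-line each field has the form `x ↦ x * A (log (x ^ 2 / 2))`, with `A` the
constant `a` or `±b√k` times `sin` or `cos`, and such a function has derivative
`(A + 2A') (log (x ^ 2 / 2))`. So on a half-line the Lie derivative `f_i' f_j` is again of this
form, with profile `B = (A_i + 2A_i') A_j`, and
`B + 2B' = (A_i + 2A_i') (A_j + 2A_j') + 2 (A_i' + 2A_i'') A_j` is bounded by
`L_i L_j + 6|b|√k L_j`; the mean value theorem makes it Lipschitz there. Across the origin the
linear bound `|L_{f_j} f_i (x)| ≤ L_i L_j |x|` suffices.
-/

open Real Set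

lemma abs_mul_le_mul_of_abs_le {p q P Q : ℝ} (hp : |p| ≤ P) (hq : |q| ≤ Q) :
    |p * q| ≤ P * Q := by
  rw [abs_mul]
  exact mul_le_mul hp hq (abs_nonneg q) ((abs_nonneg p).trans hp)

lemma hasDerivAt_log_sq_div_two {z : ℝ} (hz : z ≠ 0) :
    HasDerivAt (fun t : ℝ => log (t ^ 2 / 2)) (2 / z) z := by
  convert ((hasDerivAt_pow 2 z).div_const 2).log (by positivity) using 1
  field_simp
  norm_num

lemma hasDerivAt_mul_comp_log_sq_div_two {A A' : ℝ → ℝ} (hA : ∀ u, HasDerivAt A (A' u) u)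
    {z : ℝ} (hz : z ≠ 0) :
    HasDerivAt (fun t => t * A (log (t ^ 2 / 2)))
      (A (log (z ^ 2 / 2)) + 2 * A' (log (z ^ 2 / 2))) z := by
  refine ((hasDerivAt_id z).mul ((hA _).comp z (hasDerivAt_log_sq_div_two hz))).congr_deriv ?_
  simp only [Function.comp_apply, id]
  field_simp

lemma abs_sub_le_of_eqOn_mul_comp_log_sq_div_two {g B B' : ℝ → ℝ} {C : ℝ} {s : Set ℝ}
    (hs : IsOpen s) (hsc : Convex ℝ s) (h0 : (0 : ℝ) ∉ s)
    (hB : ∀ u, HasDerivAt B (B' u) u) (hBC : ∀ u, |B u + 2 * B' u| ≤ C)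
    (hg : EqOn g (fun t => t * B (log (t ^ 2 / 2))) s) {x y : ℝ} (hx : x ∈ s) (hy : y ∈ s) :
    |g x - g y| ≤ C * |x - y| := by
  have hderiv : ∀ z ∈ s,
      HasDerivWithinAt g (B (log (z ^ 2 / 2)) + 2 * B' (log (z ^ 2 / 2))) s z := fun z hz =>
    ((hasDerivAt_mul_comp_log_sq_div_two hB (ne_of_mem_of_not_mem hz h0)).congr_of_eventuallyEq
      (hg.eventuallyEq_of_mem (hs.mem_nhds hz))).hasDerivWithinAt
  simpa only [Real.norm_eq_abs] using
    hsc.norm_image_sub_le_of_norm_hasDerivWithin_le hderiv (fun z _ => hBC _) hy hx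

lemma abs_sub_le_of_abs_sub_le_of_pos_of_neg {g : ℝ → ℝ} {C : ℝ}
    (hpos : ∀ x y, 0 < x → 0 < y → |g x - g y| ≤ C * |x - y|)
    (hneg : ∀ x y, x < 0 → y < 0 → |g x - g y| ≤ C * |x - y|)
    (hlin : ∀ x, |g x| ≤ C * |x|) (x y : ℝ) : |g x - g y| ≤ C * |x - y| := by
  rcases lt_or_ge 0 (x * y) with hxy | hxy
  · rcases pos_and_pos_or_neg_and_neg_of_mul_pos hxy with ⟨hx, hy⟩ | ⟨hx, hy⟩
    exacts [hpos x y hx hy, hneg x y hx hy]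
  · have hopp : |x| + |y| = |x - y| := by
      rcases abs_cases x with ⟨hx, _⟩ | ⟨hx, _⟩ <;>
        rcases abs_cases y with ⟨hy, _⟩ | ⟨hy, _⟩ <;>
        rcases abs_cases (x - y) with ⟨hd, _⟩ | ⟨hd, _⟩ <;> nlinarith
    calc |g x - g y| ≤ |g x| + |g y| := abs_sub _ _
      _ ≤ C * |x| + C * |y| := add_le_add (hlin x) (hlin y)
      _ = C * |x - y| := by rw [← hopp, mul_add]

/-- On the half-line `0 < ε * x`, `f x = x * A (log (x ^ 2 / 2))`, so that there
`f' x = (A + 2A') (log (x ^ 2 / 2))`. -/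
def HasLogProfile (f : ℝ → ℝ) (ε K L : ℝ) : Prop :=
  ∃ A A' A'' : ℝ → ℝ,
    (∀ u, HasDerivAt A (A' u) u) ∧ (∀ u, HasDerivAt A' (A'' u) u) ∧
    (∀ x, 0 < ε * x → f x = x * A (log (x ^ 2 / 2))) ∧
    (∀ u, |A u| ≤ L) ∧ (∀ u, |A u + 2 * A' u| ≤ L) ∧ (∀ u, |A' u + 2 * A'' u| ≤ K)

lemma HasLogProfile.abs_lie_sub_le {fi fj g : ℝ → ℝ} {ε K Li Lj : ℝ}
    (hi : HasLogProfile fi ε K Li) (hj : HasLogProfile fj ε K Lj)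
    (hg : ∀ x, 0 < ε * x → g x = deriv fi x * fj x) :
    (∀ x y, 0 < ε * x → 0 < ε * y → |g x - g y| ≤ (2 * K * Lj + Li * Lj) * |x - y|) ∧
      ∀ x, 0 < ε * x → |g x| ≤ (2 * K * Lj + Li * Lj) * |x| := by
  obtain ⟨Ai, Ai', Ai'', hAi, hAi', hfi, -, hAi₁, hAi₂⟩ := hi
  obtain ⟨Aj, Aj', -, hAj, -, hfj, hAj₀, hAj₁, -⟩ := hj
  set s : Set ℝ := {x | 0 < ε * x}
  have hs : IsOpen s := isOpen_lt continuous_const (by fun_prop)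
  have hK : 0 ≤ K := (abs_nonneg _).trans (hAi₂ 0)
  have hLj : 0 ≤ Lj := (abs_nonneg _).trans (hAj₀ 0)
  have hderiv : ∀ x ∈ s, deriv fi x = Ai (log (x ^ 2 / 2)) + 2 * Ai' (log (x ^ 2 / 2)) :=
    fun x hx =>
      ((hasDerivAt_mul_comp_log_sq_div_two hAi (right_ne_zero_of_mul hx.ne')).congr_of_eventuallyEq
        (EqOn.eventuallyEq_of_mem hfi (hs.mem_nhds hx))).deriv
  set B : ℝ → ℝ := fun u => (Ai u + 2 * Ai' u) * Aj u
  have hg' : EqOn g (fun t => t * B (log (t ^ 2 / 2))) s := fun x hx => by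
    simp only [B, hg x hx, hderiv x hx, hfj x hx]
    ring
  have hB : ∀ u, HasDerivAt B ((Ai' u + 2 * Ai'' u) * Aj u + (Ai u + 2 * Ai' u) * Aj' u) u :=
    fun u => ((hAi u).add ((hAi' u).const_mul 2)).mul (hAj u)
  have hBC : ∀ u, |B u + 2 * ((Ai' u + 2 * Ai'' u) * Aj u + (Ai u + 2 * Ai' u) * Aj' u)|
      ≤ 2 * K * Lj + Li * Lj := fun u => calc
    _ = |2 * ((Ai' u + 2 * Ai'' u) * Aj u) + (Ai u + 2 * Ai' u) * (Aj u + 2 * Aj' u)| := by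
      simp only [B]
      congr 1
      ring
    _ ≤ 2 * (K * Lj) + Li * Lj := by
      refine (abs_add_le _ _).trans (add_le_add ?_ (abs_mul_le_mul_of_abs_le (hAi₁ u) (hAj₁ u)))
      rw [abs_mul, abs_two]
      exact mul_le_mul_of_nonneg_left (abs_mul_le_mul_of_abs_le (hAi₂ u) (hAj₀ u)) zero_le_two
    _ = 2 * K * Lj + Li * Lj := by ring
  refine ⟨fun x y hx hy => abs_sub_le_of_eqOn_mul_comp_log_sq_div_two hs
    (convex_halfSpace_gt (IsLinearMap.isLinearMap_smul ε) 0) (by simp [s]) hB hBC hg' hx hy,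
    fun x hx => ?_⟩
  calc |g x| = |B (log (x ^ 2 / 2))| * |x| := by rw [hg' hx, abs_mul, mul_comm]
    _ ≤ Li * Lj * |x| := by
      gcongr
      exact abs_mul_le_mul_of_abs_le (hAi₁ _) (hAj₀ _)
    _ ≤ (2 * K * Lj + Li * Lj) * |x| := by gcongr; nlinarith

lemma abs_lie_sub_le {fi fj g : ℝ → ℝ} {K Li Lj : ℝ}
    (hi : ∀ ε : ℝ, |ε| = 1 → HasLogProfile fi ε K Li)
    (hj : ∀ ε : ℝ, |ε| = 1 → HasLogProfile fj ε K Lj)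
    (hg : ∀ x, g x = if x = 0 then 0 else deriv fi x * fj x) :
    (∀ x y, |g x - g y| ≤ (2 * K * Lj + Li * Lj) * |x - y|) ∧ g 0 = 0 := by
  have hg₀ : g 0 = 0 := by simp [hg 0]
  have hside := fun (ε : ℝ) (hε : |ε| = 1) => (hi ε hε).abs_lie_sub_le (g := g) (hj ε hε)
    fun x hx => by rw [hg x, if_neg (right_ne_zero_of_mul hx.ne')]
  obtain ⟨hpos, hlin_pos⟩ := hside 1 abs_one
  obtain ⟨hneg, hlin_neg⟩ := hside (-1) (by simp)
  refine ⟨abs_sub_le_of_abs_sub_le_of_pos_of_neg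
    (fun x y hx hy => hpos x y (by linarith) (by linarith))
    (fun x y hx hy => hneg x y (by linarith) (by linarith)) fun x => ?_, hg₀⟩
  rcases lt_trichotomy x 0 with hx | rfl | hx
  · exact hlin_neg x (by linarith)
  · simp [hg₀]
  · exact hlin_pos x (by linarith)

lemma hasLogProfile_const_mul (a : ℝ) {ε K : ℝ} (hK : 0 ≤ K) :
    HasLogProfile (fun x => a * x) ε K |a| :=
  ⟨fun _ => a, fun _ => 0, fun _ => 0, fun u => hasDerivAt_const u a,
    fun u => hasDerivAt_const u 0, fun x _ => mul_comm a x, fun _ => le_rfl,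
    fun _ => by simp, fun _ => by simpa using hK⟩

lemma hasLogProfile_of_eq_mul_abs {f T T' T'' : ℝ → ℝ} {c ε : ℝ} (hε : |ε| = 1)
    (hT : ∀ u, HasDerivAt T (T' u) u) (hT' : ∀ u, HasDerivAt T' (T'' u) u)
    (hT₀ : ∀ u, |T u| ≤ 1) (hT₁ : ∀ u, |T u + 2 * T' u| ≤ 3)
    (hT₂ : ∀ u, |T' u + 2 * T'' u| ≤ 3)
    (hf : ∀ x, x ≠ 0 → f x = c * |x| * T (log (x ^ 2 / 2))) :
    HasLogProfile f ε (3 * |c|) (3 * |c|) := by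
  have habs : ∀ t, |ε * c * t| = |c| * |t| := fun t => by rw [abs_mul, abs_mul, hε, one_mul]
  refine ⟨fun u => ε * c * T u, fun u => ε * c * T' u, fun u => ε * c * T'' u,
    fun u => (hT u).const_mul _, fun u => (hT' u).const_mul _, fun x hx => ?_,
    fun u => ?_, fun u => ?_, fun u => ?_⟩
  · have hx_abs : |x| = ε * x := by rw [← abs_of_pos hx, abs_mul, hε, one_mul]
    rw [hf x (right_ne_zero_of_mul hx.ne'), hx_abs]
    ring
  · rw [habs]
    nlinarith [hT₀ u, abs_nonneg c]
  · rw [show ε * c * T u + 2 * (ε * c * T' u) = ε * c * (T u + 2 * T' u) by ring, habs,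
      mul_comm 3]
    exact mul_le_mul_of_nonneg_left (hT₁ u) (abs_nonneg c)
  · rw [show ε * c * T' u + 2 * (ε * c * T'' u) = ε * c * (T' u + 2 * T'' u) by ring, habs,
      mul_comm 3]
    exact mul_le_mul_of_nonneg_left (hT₂ u) (abs_nonneg c)

lemma abs_mul_sin_add_mul_cos_le (p q u : ℝ) : |p * sin u + q * cos u| ≤ |p| + |q| :=
  (abs_add_le _ _).trans <| add_le_add
    ((abs_mul_le_mul_of_abs_le le_rfl (abs_sin_le_one u)).trans_eq (mul_one _))
    ((abs_mul_le_mul_of_abs_le le_rfl (abs_cos_le_one u)).trans_eq (mul_one _))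

lemma hasLogProfile_mul_abs_sin (c : ℝ) {ε : ℝ} (hε : |ε| = 1) :
    HasLogProfile (fun x => if x = 0 then 0 else c * |x| * sin (log (x ^ 2 / 2)))
      ε (3 * |c|) (3 * |c|) :=
  hasLogProfile_of_eq_mul_abs hε hasDerivAt_sin hasDerivAt_cos abs_sin_le_one
    (fun u => by
      rw [show sin u + 2 * cos u = 1 * sin u + 2 * cos u by ring]
      exact (abs_mul_sin_add_mul_cos_le _ _ u).trans_eq (by norm_num))
    (fun u => by
      rw [show cos u + 2 * -sin u = -2 * sin u + 1 * cos u by ring]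
      exact (abs_mul_sin_add_mul_cos_le _ _ u).trans_eq (by norm_num))
    fun x hx => if_neg hx

lemma hasLogProfile_mul_abs_cos (c : ℝ) {ε : ℝ} (hε : |ε| = 1) :
    HasLogProfile (fun x => if x = 0 then 0 else c * |x| * cos (log (x ^ 2 / 2)))
      ε (3 * |c|) (3 * |c|) :=
  hasLogProfile_of_eq_mul_abs hε hasDerivAt_cos (fun u => (hasDerivAt_sin u).neg)
    abs_cos_le_one
    (fun u => by
      rw [show cos u + 2 * -sin u = -2 * sin u + 1 * cos u by ring]
      exact (abs_mul_sin_add_mul_cos_le _ _ u).trans_eq (by norm_num))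
    (fun u => by
      rw [show -sin u + 2 * -cos u = -1 * sin u + -2 * cos u by ring]
      exact (abs_mul_sin_add_mul_cos_le _ _ u).trans_eq (by norm_num))
    fun x hx => if_neg hx

theorem lipschitz_properties_II_general
    (a b k : ℝ)
    (f : Fin 3 → ℝ → ℝ)
    (hf0 : ∀ x, f 0 x = a * x)
    (hf1 : ∀ x, f 1 x =
      if x = 0 then 0 else b * Real.sqrt k * |x| * Real.sin (Real.log (x ^ 2 / 2)))
    (hf2 : ∀ x, f 2 x =
      if x = 0 then 0 else b * Real.sqrt k * |x| * Real.cos (Real.log (x ^ 2 / 2)))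
    (L : Fin 3 → ℝ)
    (hL0 : L 0 = |a|) (hL1 : L 1 = 3 * |b| * Real.sqrt k) (hL2 : L 2 = 3 * |b| * Real.sqrt k)
    (Lf : Fin 3 → Fin 3 → ℝ → ℝ)
    (hLf : ∀ (j i : Fin 3) (x : ℝ),
      Lf j i x = if x = 0 then 0 else deriv (f i) x * f j x) :
    ∀ j i : Fin 3,
      (∀ x y : ℝ, |Lf j i x - Lf j i y|
        ≤ (6 * |b| * Real.sqrt k * L j + L i * L j) * |x - y|) ∧
      Lf j i 0 = 0 := by
  have hK : 3 * |b * √k| = 3 * |b| * √k := by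
    rw [abs_mul, abs_of_nonneg (sqrt_nonneg k), mul_assoc]
  have hprofile : ∀ i ε, |ε| = 1 → HasLogProfile (f i) ε (3 * |b| * √k) (L i) := by
    intro i ε hε
    match i with
    | 0 =>
      rw [show f 0 = _ from funext hf0, hL0]
      exact hasLogProfile_const_mul a (by positivity)
    | 1 =>
      rw [show f 1 = _ from funext hf1, hL1, ← hK]
      exact hasLogProfile_mul_abs_sin _ hε
    | 2 =>
      rw [show f 2 = _ from funext hf2, hL2, ← hK]
      exact hasLogProfile_mul_abs_cos _ hε
  intro j i
  obtain ⟨hlip, hzero⟩ := abs_lie_sub_le (hprofile i) (hprofile j) (hLf j i)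
  exact ⟨fun x y => (hlip x y).trans_eq (by ring), hzero⟩

/-- **Lipschitz properties II** (example system, Lemma 17): the Lie derivatives
`L_{f_j} f_i (x) = f_i′(x) f_j(x)` (extended by `0` at `x = 0`) of the example vector
fields are globally Lipschitz with constants `L_{ij} = 6|b|√k L_j + L_i L_j`, and
vanish at the origin. -/
theorem lipschitz_properties_II
    (a b k : ℝ) (hb : b ≠ 0) (hk : 0 < k)
    (f : Fin 3 → ℝ → ℝ)
    (hf0 : ∀ x, f 0 x = a * x)
    (hf1 : ∀ x, f 1 x =
      if x = 0 then 0 else b * Real.sqrt k * |x| * Real.sin (Real.log (x ^ 2 / 2)))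
    (hf2 : ∀ x, f 2 x =
      if x = 0 then 0 else b * Real.sqrt k * |x| * Real.cos (Real.log (x ^ 2 / 2)))
    (L : Fin 3 → ℝ)
    (hL0 : L 0 = |a|) (hL1 : L 1 = 3 * |b| * Real.sqrt k) (hL2 : L 2 = 3 * |b| * Real.sqrt k)
    (Lf : Fin 3 → Fin 3 → ℝ → ℝ)
    (hLf : ∀ (j i : Fin 3) (x : ℝ),
      Lf j i x = if x = 0 then 0 else deriv (f i) x * f j x) :
    ∀ j i : Fin 3,
      (∀ x y : ℝ, |Lf j i x - Lf j i y|
        ≤ (6 * |b| * Real.sqrt k * L j + L i * L j) * |x - y|) ∧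
      Lf j i 0 = 0 :=
  lipschitz_properties_II_general a b k f hf0 hf1 hf2 L hL0 hL1 hL2 Lf hLf
end

section
/- Lipschitz properties III (example system): Let a ∈ ℝ, b ∈ ℝ \ {0} and k > 0, and let f₀(x) := a x, f₁(x) := b √k |x| sin(log(x²/2)) for x ≠ 0 with f₁(0) := 0, and f₂(x) := b √k |x| cos(log(x²/2)) for x ≠ 0 with f₂(0) := 0. For i, j, m ∈ {0,1,2} define L_{f_j}f_i(x) := f_i′(x) f_j(x) for x ≠ 0 with L_{f_j}f_i(0) := 0, and L_{f_m}L_{f_j}f_i(x) := (L_{f_j}f_i)′(x) · f_m(x) for x ≠ 0 (the classical derivative exists for all x ≠ 0) with L_{f_m}L_{f_j}f_i(0) := 0. Then each L_{f_m}L_{f_j}f_i is globally Lipschitz with constant L_{ijm} := 22|b|√k · L_j L_m + 6|b|√k · L_i L_m + L_i L_j L_m, where L₀ := |a| and L₁ = L₂ := 3|b|√k. -/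
/-!
On each open half-line `y ↦ |y|` is `±y`, so there every `f ι` has the form
`y ↦ y · P (log (y² / 2))` with `P = a`, `± b√k sin` or `± b√k cos`. Differentiating such a
"radial lift" gives `(P + 2P') (log (y² / 2))`, so Lie derivatives of radial lifts are again
radial lifts, of profiles computed by a Leibniz calculus on derivative sequences. The second Lie
derivatives are thus `y · T (log (y² / 2))` with derivative `(T + 2T') (log (y² / 2))`, and both
`T` and `T + 2T'` are trigonometric polynomials bounded by `L_{ijm}`: the bound on `T` gives
`|L_{f_m}L_{f_j}f_i(y)| ≤ L_{ijm} |y|`, which handles pairs of points on opposite sides of `0`,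
and the bound on `T + 2T'` with the mean value theorem handles pairs on one side.
-/

open Real Finset Set

noncomputable section

def radialLift (g : ℝ → ℝ) (y : ℝ) : ℝ := y * g (log (y ^ 2 / 2))

def IsDerivSeq (J : ℕ → ℝ → ℝ) : Prop := ∀ n t, HasDerivAt (J n) (J (n + 1) t) t

def radialDeriv (J : ℕ → ℝ → ℝ) (n : ℕ) (t : ℝ) : ℝ := J n t + 2 * J (n + 1) t

def leibnizMul (J K : ℕ → ℝ → ℝ) (n : ℕ) (t : ℝ) : ℝ :=
  ∑ k ∈ range (n + 1), (n.choose k : ℝ) * (J k t * K (n - k) t)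

/-- The profile of the Lie derivative `L_G F = F' · G` of two radial lifts. -/
def lieProfile (J K : ℕ → ℝ → ℝ) : ℕ → ℝ → ℝ := leibnizMul (radialDeriv J) K

theorem hasDerivAt_radialLift {g : ℝ → ℝ} {g' x : ℝ} (hx : x ≠ 0)
    (hg : HasDerivAt g g' (log (x ^ 2 / 2))) :
    HasDerivAt (radialLift g) (g (log (x ^ 2 / 2)) + 2 * g') x := by
  have hu : HasDerivAt (fun y => log (y ^ 2 / 2)) (2 / x) x := by
    convert ((hasDerivAt_pow 2 x).div_const 2).log (by positivity) using 1
    field_simp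
    norm_num
  refine ((hasDerivAt_id' x).mul (hg.comp x hu)).congr_deriv ?_
  field_simp
  rfl

namespace IsDerivSeq

variable {J K : ℕ → ℝ → ℝ}

theorem radialDeriv (hJ : IsDerivSeq J) : IsDerivSeq (radialDeriv J) := fun n t =>
  (hJ n t).add ((hJ (n + 1) t).const_mul 2)

theorem leibnizMul (hJ : IsDerivSeq J) (hK : IsDerivSeq K) : IsDerivSeq (leibnizMul J K) := by
  intro n t
  refine (HasDerivAt.fun_sum fun k _ =>
    ((hJ k t).mul (hK (n - k) t)).const_mul (n.choose k : ℝ)).congr_deriv ?_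
  rw [_root_.leibnizMul, sum_choose_succ_mul (fun i l => J i t * K l t), ← sum_add_distrib]
  refine sum_congr rfl fun k hk => ?_
  rw [show n + 1 - k = n - k + 1 by have := mem_range.mp hk; omega]
  ring

theorem lieProfile (hJ : IsDerivSeq J) (hK : IsDerivSeq K) : IsDerivSeq (lieProfile J K) :=
  hJ.radialDeriv.leibnizMul hK

end IsDerivSeq

theorem hasDerivAt_of_eqOn_radialLift {V : Set ℝ} (hV : IsOpen V) {F : ℝ → ℝ}
    {J : ℕ → ℝ → ℝ} (hJ : IsDerivSeq J) (hF : EqOn F (radialLift (J 0)) V) {x : ℝ}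
    (hxV : x ∈ V) (hx : x ≠ 0) :
    HasDerivAt F (radialDeriv J 0 (log (x ^ 2 / 2))) x :=
  (hasDerivAt_radialLift hx (hJ 0 _)).congr_of_eventuallyEq
    (Filter.eventuallyEq_of_mem (hV.mem_nhds hxV) hF)

theorem eqOn_radialLift_lieProfile {V : Set ℝ} (hV : IsOpen V) (hV0 : ∀ y ∈ V, y ≠ 0)
    {F G H : ℝ → ℝ} {J K : ℕ → ℝ → ℝ} (hJ : IsDerivSeq J)
    (hF : EqOn F (radialLift (J 0)) V) (hG : EqOn G (radialLift (K 0)) V)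
    (hH : ∀ y ∈ V, H y = deriv F y * G y) :
    EqOn H (radialLift (lieProfile J K 0)) V := by
  intro y hy
  rw [hH y hy, (hasDerivAt_of_eqOn_radialLift hV hJ hF hy (hV0 y hy)).deriv, hG hy]
  simp only [radialLift, lieProfile, leibnizMul, zero_add, range_one, zero_tsub, sum_singleton,
    Nat.choose_self, Nat.cast_one, one_mul]
  ring

section expansions

variable (J K : ℕ → ℝ → ℝ) (t : ℝ)

theorem lieProfile_zero : lieProfile J K 0 t = radialDeriv J 0 t * K 0 t := by
  simp [lieProfile, leibnizMul]

theorem radialDeriv_lieProfile_zero :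
    radialDeriv (lieProfile J K) 0 t
      = radialDeriv J 0 t * radialDeriv K 0 t + 2 * radialDeriv J 1 t * K 0 t := by
  simp only [lieProfile, leibnizMul, radialDeriv, sum_range_succ, sum_range_zero,
    Nat.choose_self, Nat.choose_zero_right, Nat.reduceAdd, Nat.reduceSub, Nat.cast_one]
  ring

theorem radialDeriv_lieProfile_one :
    radialDeriv (lieProfile J K) 1 t
      = radialDeriv J 0 t * radialDeriv K 1 t + radialDeriv (radialDeriv J) 1 t * K 0 t
        + 4 * radialDeriv J 1 t * K 1 t := by
  simp only [lieProfile, leibnizMul, radialDeriv, sum_range_succ, sum_range_zero,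
    Nat.choose_self, Nat.choose_zero_right, Nat.choose_one_right, Nat.reduceAdd, Nat.reduceSub,
    Nat.cast_one, Nat.cast_ofNat]
  ring

end expansions

/-- The derivatives of `t ↦ α + c sin (t + φ)`. -/
def sinusoidSeq (α c φ : ℝ) (n : ℕ) (t : ℝ) : ℝ :=
  (if n = 0 then α else 0) + c * sin (t + φ + n * (π / 2))

section sinusoidSeq

variable (α c φ t : ℝ)

theorem isDerivSeq_sinusoidSeq {α c φ : ℝ} : IsDerivSeq (sinusoidSeq α c φ) := by
  intro n t
  refine (((((hasDerivAt_id' t).add_const φ).add_const (n * (π / 2))).sin.const_mul c).const_add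
    (if n = 0 then α else 0)).congr_deriv ?_
  simp only [sinusoidSeq, Nat.succ_ne_zero, if_false, Nat.cast_succ, add_mul, one_mul,
    ← add_assoc, sin_add_pi_div_two]
  ring

theorem abs_sinusoidSeq_zero_le : |sinusoidSeq α c φ 0 t| ≤ |α| + |c| := by
  simp only [sinusoidSeq, if_true, CharP.cast_eq_zero, zero_mul, add_zero]
  refine (abs_add_le _ _).trans ?_
  rw [abs_mul]
  gcongr
  exact mul_le_of_le_one_right (abs_nonneg c) (abs_sin_le_one _)

theorem abs_sinusoidSeq_succ_le (n : ℕ) : |sinusoidSeq α c φ (n + 1) t| ≤ |c| := by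
  simp only [sinusoidSeq, Nat.succ_ne_zero, if_false, zero_add, abs_mul]
  exact mul_le_of_le_one_right (abs_nonneg c) (abs_sin_le_one _)

theorem sinusoidSeq_three : sinusoidSeq α c φ 3 t = -sinusoidSeq α c φ 1 t := by
  simp only [sinusoidSeq, OfNat.ofNat_ne_zero, one_ne_zero, if_false, zero_add, Nat.cast_ofNat,
    Nat.cast_one]
  rw [show t + φ + 3 * (π / 2) = t + φ + 1 * (π / 2) + π by ring, sin_add_pi]
  ring

theorem abs_radialDeriv_sinusoidSeq_zero_le :
    |radialDeriv (sinusoidSeq α c φ) 0 t| ≤ |α| + 3 * |c| := by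
  have h0 := abs_le.mp (abs_sinusoidSeq_zero_le α c φ t)
  have h1 := abs_le.mp (abs_sinusoidSeq_succ_le α c φ t 0)
  rw [radialDeriv, abs_le]
  constructor <;> linarith

theorem abs_radialDeriv_sinusoidSeq_one_le :
    |radialDeriv (sinusoidSeq α c φ) 1 t| ≤ 3 * |c| := by
  have h1 := abs_le.mp (abs_sinusoidSeq_succ_le α c φ t 0)
  have h2 := abs_le.mp (abs_sinusoidSeq_succ_le α c φ t 1)
  rw [radialDeriv, abs_le]
  constructor <;> linarith

theorem abs_radialDeriv_radialDeriv_sinusoidSeq_one_le :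
    |radialDeriv (radialDeriv (sinusoidSeq α c φ)) 1 t| ≤ 7 * |c| := by
  have h1 := abs_le.mp (abs_sinusoidSeq_succ_le α c φ t 0)
  have h2 := abs_le.mp (abs_sinusoidSeq_succ_le α c φ t 1)
  simp only [radialDeriv, Nat.reduceAdd, sinusoidSeq_three]
  rw [abs_le]
  constructor <;> linarith

end sinusoidSeq

section secondLieBounds

variable {αi ci φi αj cj φj αm cm φm B : ℝ} (t : ℝ)

theorem abs_radialDeriv_lieProfile_sinusoidSeq_zero_le :
    |radialDeriv (lieProfile (sinusoidSeq αi ci φi) (sinusoidSeq αj cj φj)) 0 t|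
      ≤ (|αi| + 3 * |ci|) * (|αj| + 3 * |cj|) + 6 * |ci| * (|αj| + |cj|) := by
  rw [radialDeriv_lieProfile_zero]
  refine (abs_add_le _ _).trans ?_
  simp only [abs_mul, abs_two]
  have := abs_radialDeriv_sinusoidSeq_one_le αi ci φi t
  have := abs_sinusoidSeq_zero_le αj cj φj t
  have := abs_radialDeriv_sinusoidSeq_zero_le αi ci φi t
  have := abs_radialDeriv_sinusoidSeq_zero_le αj cj φj t
  calc _ ≤ (|αi| + 3 * |ci|) * (|αj| + 3 * |cj|) + 2 * (3 * |ci|) * (|αj| + |cj|) := by gcongr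
    _ = _ := by ring

theorem abs_radialDeriv_lieProfile_sinusoidSeq_one_le :
    |radialDeriv (lieProfile (sinusoidSeq αi ci φi) (sinusoidSeq αj cj φj)) 1 t|
      ≤ 3 * (|αi| + 3 * |ci|) * |cj| + 7 * |ci| * (|αj| + |cj|) + 12 * |ci| * |cj| := by
  rw [radialDeriv_lieProfile_one]
  refine (abs_add_three _ _ _).trans ?_
  simp only [abs_mul, abs_of_pos (by norm_num : (0 : ℝ) < 4)]
  have := abs_radialDeriv_sinusoidSeq_zero_le αi ci φi t
  have := abs_radialDeriv_sinusoidSeq_one_le αi ci φi t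
  have := abs_radialDeriv_radialDeriv_sinusoidSeq_one_le αi ci φi t
  have := abs_sinusoidSeq_zero_le αj cj φj t
  have := abs_sinusoidSeq_succ_le αj cj φj t 0
  have := abs_radialDeriv_sinusoidSeq_one_le αj cj φj t
  calc _ ≤ (|αi| + 3 * |ci|) * (3 * |cj|) + 7 * |ci| * (|αj| + |cj|)
        + 4 * (3 * |ci|) * |cj| := by gcongr
    _ = _ := by ring

theorem abs_lieProfile_lieProfile_sinusoidSeq_zero_le (hci : |ci| ≤ B) :
    |lieProfile (lieProfile (sinusoidSeq αi ci φi) (sinusoidSeq αj cj φj))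
        (sinusoidSeq αm cm φm) 0 t|
      ≤ 22 * B * (|αj| + 3 * |cj|) * (|αm| + 3 * |cm|)
        + 6 * B * (|αi| + 3 * |ci|) * (|αm| + 3 * |cm|)
        + (|αi| + 3 * |ci|) * (|αj| + 3 * |cj|) * (|αm| + 3 * |cm|) := by
  have hB : 0 ≤ B := (abs_nonneg ci).trans hci
  rw [lieProfile_zero, abs_mul]
  have hr0 : |sinusoidSeq αm cm φm 0 t| ≤ |αm| + 3 * |cm| :=
    (abs_sinusoidSeq_zero_le αm cm φm t).trans (by linarith [abs_nonneg cm])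
  calc _ ≤ ((|αi| + 3 * |ci|) * (|αj| + 3 * |cj|) + 6 * |ci| * (|αj| + |cj|))
        * (|αm| + 3 * |cm|) := by
        gcongr
        exact abs_radialDeriv_lieProfile_sinusoidSeq_zero_le t
    _ ≤ _ := by
        linear_combination (6 * (|αj| + |cj|) * (|αm| + 3 * |cm|)) * hci
          + ((16 * |αj| + 60 * |cj| + 6 * (|αi| + 3 * |ci|)) * (|αm| + 3 * |cm|)) * hB

theorem abs_radialDeriv_lieProfile_lieProfile_sinusoidSeq_zero_le (hci : |ci| ≤ B)
    (hcj : |cj| ≤ B) :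
    |radialDeriv (lieProfile (lieProfile (sinusoidSeq αi ci φi) (sinusoidSeq αj cj φj))
        (sinusoidSeq αm cm φm)) 0 t|
      ≤ 22 * B * (|αj| + 3 * |cj|) * (|αm| + 3 * |cm|)
        + 6 * B * (|αi| + 3 * |ci|) * (|αm| + 3 * |cm|)
        + (|αi| + 3 * |ci|) * (|αj| + 3 * |cj|) * (|αm| + 3 * |cm|) := by
  have hB : 0 ≤ B := (abs_nonneg ci).trans hci
  rw [radialDeriv_lieProfile_zero]
  refine (abs_add_le _ _).trans ?_
  simp only [abs_mul, abs_two]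
  have hr0 : |sinusoidSeq αm cm φm 0 t| ≤ |αm| + 3 * |cm| :=
    (abs_sinusoidSeq_zero_le αm cm φm t).trans (by linarith [abs_nonneg cm])
  have := abs_radialDeriv_sinusoidSeq_zero_le αm cm φm t
  have := abs_radialDeriv_lieProfile_sinusoidSeq_zero_le (αi := αi) (ci := ci) (φi := φi)
    (αj := αj) (cj := cj) (φj := φj) t
  have := abs_radialDeriv_lieProfile_sinusoidSeq_one_le (αi := αi) (ci := ci) (φi := φi)
    (αj := αj) (cj := cj) (φj := φj) t
  calc _ ≤ ((|αi| + 3 * |ci|) * (|αj| + 3 * |cj|) + 6 * |ci| * (|αj| + |cj|))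
          * (|αm| + 3 * |cm|)
        + 2 * (3 * (|αi| + 3 * |ci|) * |cj| + 7 * |ci| * (|αj| + |cj|) + 12 * |ci| * |cj|)
          * (|αm| + 3 * |cm|) := by
        gcongr
    _ ≤ _ := by
        -- `20 |αj| + 44 |cj| ≤ 22 (|αj| + 3 |cj|)` is where the factor `22` comes from.
        linear_combination (6 * (|αi| + 3 * |ci|) * (|αm| + 3 * |cm|)) * hcj
          + ((20 * |αj| + 44 * |cj|) * (|αm| + 3 * |cm|)) * hci
          + ((2 * |αj| + 22 * |cj|) * (|αm| + 3 * |cm|)) * hB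

end secondLieBounds

theorem abs_sub_le_of_hasDerivAt_of_abs_le {g : ℝ → ℝ} {C : ℝ}
    (hg : ∀ z, |g z| ≤ C * |z|) (hd : ∀ z ≠ 0, ∃ d, HasDerivAt g d z ∧ |d| ≤ C) (x y : ℝ) :
    |g x - g y| ≤ C * |x - y| := by
  wlog hxy : x ≤ y generalizing x y
  · rw [abs_sub_comm, abs_sub_comm x]
    exact this y x (le_of_not_ge hxy)
  choose! d hdd hdb using hd
  have same_sign : ∀ s : Set ℝ, Convex ℝ s → (∀ z ∈ s, z ≠ 0) → x ∈ s → y ∈ s →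
      |g x - g y| ≤ C * |x - y| := fun s hs hs0 hx hy => by
    simpa only [Real.norm_eq_abs] using hs.norm_image_sub_le_of_norm_hasDerivWithin_le
      (fun z hz => (hdd z (hs0 z hz)).hasDerivWithinAt) (fun z hz => hdb z (hs0 z hz))
      hy hx
  by_cases hx : 0 < x
  · exact same_sign (Ioi 0) (convex_Ioi 0) (fun z hz => ne_of_gt hz) hx (hx.trans_le hxy)
  by_cases hy : y < 0
  · exact same_sign (Iio 0) (convex_Iio 0) (fun z hz => ne_of_lt hz) (hxy.trans_lt hy) hy
  rw [not_lt] at hx hy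
  calc |g x - g y| ≤ |g x| + |g y| := abs_sub _ _
    _ ≤ C * |x| + C * |y| := add_le_add (hg x) (hg y)
    _ = C * |x - y| := by
        rw [abs_of_nonpos hx, abs_of_nonneg hy, abs_of_nonpos (by linarith : x - y ≤ 0)]
        ring

theorem exists_isOpen_abs_eq_mul {x : ℝ} (hx : x ≠ 0) :
    ∃ s : ℝ, |s| = 1 ∧ ∃ V : Set ℝ, IsOpen V ∧ x ∈ V ∧ ∀ y ∈ V, y ≠ 0 ∧ |y| = s * y := by
  rcases hx.lt_or_gt with h | h
  · exact ⟨-1, by norm_num, Iio 0, isOpen_Iio, h,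
      fun y hy => ⟨hy.ne, by rw [abs_of_neg hy]; ring⟩⟩
  · exact ⟨1, by norm_num, Ioi 0, isOpen_Ioi, h,
      fun y hy => ⟨hy.ne', by rw [abs_of_pos hy]; ring⟩⟩

def exampleProfile (a c : ℝ) (ι : Fin 3) : ℕ → ℝ → ℝ :=
  sinusoidSeq (![a, 0, 0] ι) (![0, c, c] ι) (![0, 0, π / 2] ι)

section exampleSystem

variable {a b k : ℝ} {f : Fin 3 → ℝ → ℝ}
    (hf0 : ∀ x, f 0 x = a * x)
    (hf1 : ∀ x, f 1 x =
      if x = 0 then 0 else b * Real.sqrt k * |x| * Real.sin (Real.log (x ^ 2 / 2)))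
    (hf2 : ∀ x, f 2 x =
      if x = 0 then 0 else b * Real.sqrt k * |x| * Real.cos (Real.log (x ^ 2 / 2)))
include hf0 hf1 hf2

theorem eqOn_radialLift_exampleProfile {s : ℝ} {V : Set ℝ} (hV : ∀ y ∈ V, y ≠ 0 ∧ |y| = s * y)
    (ι : Fin 3) : EqOn (f ι) (radialLift (exampleProfile a (s * (b * √k)) ι 0)) V := by
  intro y hy
  obtain ⟨hy0, hys⟩ := hV y hy
  fin_cases ι
  · simp [hf0, radialLift, exampleProfile, sinusoidSeq, mul_comm]
  · simp only [Fin.mk_one, hf1, hy0, ↓reduceIte, hys, radialLift, exampleProfile, sinusoidSeq,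
      Matrix.cons_val_one, Matrix.cons_val_zero, add_zero, CharP.cast_eq_zero, zero_mul, zero_add]
    ring
  · simp only [Fin.reduceFinMk, hf2, hy0, ↓reduceIte, hys, radialLift, exampleProfile, sinusoidSeq,
      Matrix.cons_val, CharP.cast_eq_zero, zero_mul, add_zero, sin_add_pi_div_two, zero_add]
    ring

variable {Lf : Fin 3 → Fin 3 → ℝ → ℝ}
    (hLf : ∀ (j i : Fin 3) (x : ℝ), Lf j i x = if x = 0 then 0 else deriv (f i) x * f j x)
    {LLf : Fin 3 → Fin 3 → Fin 3 → ℝ → ℝ}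
    (hLLf : ∀ (m j i : Fin 3) (x : ℝ),
      LLf m j i x = if x = 0 then 0 else deriv (Lf j i) x * f m x)
include hLf hLLf

theorem eqOn_secondLie_radialLift_exampleProfile {s : ℝ} {V : Set ℝ} (hVo : IsOpen V)
    (hV : ∀ y ∈ V, y ≠ 0 ∧ |y| = s * y) (m j i : Fin 3) :
    EqOn (LLf m j i) (radialLift (lieProfile (lieProfile (exampleProfile a (s * (b * √k)) i)
      (exampleProfile a (s * (b * √k)) j)) (exampleProfile a (s * (b * √k)) m) 0)) V := by
  have hV0 : ∀ y ∈ V, y ≠ 0 := fun y hy => (hV y hy).1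
  have hf := eqOn_radialLift_exampleProfile hf0 hf1 hf2 hV
  have hLfV := eqOn_radialLift_lieProfile (H := Lf j i) hVo hV0 isDerivSeq_sinusoidSeq
    (hf i) (hf j) fun y hy => by rw [hLf, if_neg (hV0 y hy)]
  exact eqOn_radialLift_lieProfile hVo hV0
    (isDerivSeq_sinusoidSeq.lieProfile isDerivSeq_sinusoidSeq) hLfV (hf m)
    fun y hy => by rw [hLLf, if_neg (hV0 y hy)]

theorem secondLie_bounds_of_ne_zero {L : Fin 3 → ℝ} (hL0 : L 0 = |a|)
    (hL1 : L 1 = 3 * |b| * Real.sqrt k) (hL2 : L 2 = 3 * |b| * Real.sqrt k)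
    (m j i : Fin 3) (x : ℝ) (hx : x ≠ 0) :
    (∃ d, HasDerivAt (LLf m j i) d x ∧ |d| ≤ 22 * |b| * Real.sqrt k * L j * L m
        + 6 * |b| * Real.sqrt k * L i * L m + L i * L j * L m) ∧
      |LLf m j i x| ≤ (22 * |b| * Real.sqrt k * L j * L m + 6 * |b| * Real.sqrt k * L i * L m
        + L i * L j * L m) * |x| := by
  obtain ⟨s, hs, V, hVo, hxV, hV⟩ := exists_isOpen_abs_eq_mul hx
  have hc : ∀ ι : Fin 3, |![0, s * (b * √k), s * (b * √k)] ι| ≤ |b| * √k := by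
    intro ι
    fin_cases ι <;> simp [abs_mul, hs, abs_of_nonneg (sqrt_nonneg k)]
    positivity
  have hL : ∀ ι : Fin 3, L ι = |![a, 0, 0] ι| + 3 * |![0, s * (b * √k), s * (b * √k)] ι| := by
    intro ι
    fin_cases ι <;> simp [hL0, hL1, hL2, abs_mul, hs, abs_of_nonneg (sqrt_nonneg k)] <;> ring
  have hC : 22 * (|b| * √k) * L j * L m + 6 * (|b| * √k) * L i * L m + L i * L j * L m
      = 22 * |b| * Real.sqrt k * L j * L m + 6 * |b| * Real.sqrt k * L i * L m
        + L i * L j * L m := by ring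
  rw [← hC, hL i, hL j, hL m]
  have hLLfV := eqOn_secondLie_radialLift_exampleProfile hf0 hf1 hf2 hLf hLLf hVo hV m j i
  refine ⟨⟨_, hasDerivAt_of_eqOn_radialLift hVo
    ((isDerivSeq_sinusoidSeq.lieProfile isDerivSeq_sinusoidSeq).lieProfile
      isDerivSeq_sinusoidSeq) hLLfV hxV hx,
    abs_radialDeriv_lieProfile_lieProfile_sinusoidSeq_zero_le _ (hc i) (hc j)⟩, ?_⟩
  rw [hLLfV hxV, radialLift, abs_mul, mul_comm]
  exact mul_le_mul_of_nonneg_right (abs_lieProfile_lieProfile_sinusoidSeq_zero_le _ (hc i))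
    (abs_nonneg x)

end exampleSystem

end

theorem lipschitz_properties_III_general
    (a b k : ℝ)
    (f : Fin 3 → ℝ → ℝ)
    (hf0 : ∀ x, f 0 x = a * x)
    (hf1 : ∀ x, f 1 x =
      if x = 0 then 0 else b * Real.sqrt k * |x| * Real.sin (Real.log (x ^ 2 / 2)))
    (hf2 : ∀ x, f 2 x =
      if x = 0 then 0 else b * Real.sqrt k * |x| * Real.cos (Real.log (x ^ 2 / 2)))
    (L : Fin 3 → ℝ)
    (hL0 : L 0 = |a|) (hL1 : L 1 = 3 * |b| * Real.sqrt k) (hL2 : L 2 = 3 * |b| * Real.sqrt k)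
    (Lf : Fin 3 → Fin 3 → ℝ → ℝ)
    (hLf : ∀ (j i : Fin 3) (x : ℝ),
      Lf j i x = if x = 0 then 0 else deriv (f i) x * f j x)
    (LLf : Fin 3 → Fin 3 → Fin 3 → ℝ → ℝ)
    (hLLf : ∀ (m j i : Fin 3) (x : ℝ),
      LLf m j i x = if x = 0 then 0 else deriv (Lf j i) x * f m x) :
    ∀ m j i : Fin 3,
      ∀ x y : ℝ, |LLf m j i x - LLf m j i y|
        ≤ (22 * |b| * Real.sqrt k * L j * L m + 6 * |b| * Real.sqrt k * L i * L m
            + L i * L j * L m) * |x - y| := by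
  intro m j i
  have hlocal := secondLie_bounds_of_ne_zero hf0 hf1 hf2 hLf hLLf hL0 hL1 hL2 m j i
  refine abs_sub_le_of_hasDerivAt_of_abs_le (fun z => ?_) fun z hz => (hlocal z hz).1
  rcases eq_or_ne z 0 with rfl | hz
  · simp [hLLf]
  · exact (hlocal z hz).2

/-- **Lipschitz properties III** (example system, Lemma 18): the second Lie derivatives
`L_{f_m} L_{f_j} f_i (x) = (L_{f_j} f_i)′(x) f_m(x)` (extended by `0` at `x = 0`) of the
example vector fields are globally Lipschitz with constants
`L_{ijm} = 22|b|√k L_j L_m + 6|b|√k L_i L_m + L_i L_j L_m`. -/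
theorem lipschitz_properties_III
    (a b k : ℝ) (hb : b ≠ 0) (hk : 0 < k)
    (f : Fin 3 → ℝ → ℝ)
    (hf0 : ∀ x, f 0 x = a * x)
    (hf1 : ∀ x, f 1 x =
      if x = 0 then 0 else b * Real.sqrt k * |x| * Real.sin (Real.log (x ^ 2 / 2)))
    (hf2 : ∀ x, f 2 x =
      if x = 0 then 0 else b * Real.sqrt k * |x| * Real.cos (Real.log (x ^ 2 / 2)))
    (L : Fin 3 → ℝ)
    (hL0 : L 0 = |a|) (hL1 : L 1 = 3 * |b| * Real.sqrt k) (hL2 : L 2 = 3 * |b| * Real.sqrt k)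
    (Lf : Fin 3 → Fin 3 → ℝ → ℝ)
    (hLf : ∀ (j i : Fin 3) (x : ℝ),
      Lf j i x = if x = 0 then 0 else deriv (f i) x * f j x)
    (LLf : Fin 3 → Fin 3 → Fin 3 → ℝ → ℝ)
    (hLLf : ∀ (m j i : Fin 3) (x : ℝ),
      LLf m j i x = if x = 0 then 0 else deriv (Lf j i) x * f m x) :
    ∀ m j i : Fin 3,
      ∀ x y : ℝ, |LLf m j i x - LLf m j i y|
        ≤ (22 * |b| * Real.sqrt k * L j * L m + 6 * |b| * Real.sqrt k * L i * L m
            + L i * L j * L m) * |x - y| :=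
  lipschitz_properties_III_general a b k f hf0 hf1 hf2 L hL0 hL1 hL2 Lf hLf LLf hLLf
end
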